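/- arXiv:1105.2686 — 11 statements merged into one kernel-verified Lean document; each statement's English description precedes it below -/
import Mathlib

section
/- For any jump optimal schedule σ on m related machines with total processing requirement Q = Σⱼ pⱼ and all pⱼ ≤ 1, the ratio C_max(σ)/C*_max is at most 1 + (n-1)/Q, where C*_max is the optimal makespan. -/
/-- For any jump optimal schedule σ on m related machines with total
processing requirement Q = Σⱼ pⱼ and all pⱼ ≤ 1, C_max(σ)/C*_max ≤ 1 + (n-1)/Q. -/
theorem jump_optimal_ratio_bound
    (m n : ℕ) (hm : 0 < m) (hn : 0 < n)
    (s : Fin m → ℝ) (hspos : ∀ i, 0 < s i)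
    (p : Fin n → ℝ) (hp0 : ∀ j, 0 ≤ p j) (hp1 : ∀ j, p j ≤ 1)
    (σ : Fin n → Fin m)
    (L : Fin m → ℝ)
    (hL : ∀ i, L i = (∑ j ∈ Finset.univ.filter (fun j => σ j = i), p j) / s i)
    (hjump : ∀ (j : Fin n) (i' : Fin m), (∀ i'', L i'' ≤ L (σ j)) → i' ≠ σ j →
      L (σ j) ≤ L i' + p j / s i')
    (Copt : ℝ)
    (hCopt : Copt = ⨅ τ : Fin n → Fin m,
      ⨆ i, (∑ j ∈ Finset.univ.filter (fun j => τ j = i), p j) / s i) :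
    (⨆ i, L i) / Copt ≤ 1 + ((n : ℝ) - 1) / (∑ j, p j) := by
  haveI : Nonempty (Fin m) := ⟨⟨0, hm⟩⟩
  set Q : ℝ := ∑ j, p j with hQdef
  have hQ0 : 0 ≤ Q := Finset.sum_nonneg fun j _ => hp0 j
  have hn1 : (1 : ℝ) ≤ (n : ℝ) := by exact_mod_cast hn
  have hRHS0 : (0:ℝ) ≤ 1 + ((n : ℝ) - 1) / Q := by
    have : (0:ℝ) ≤ ((n : ℝ) - 1) / Q := div_nonneg (by linarith) hQ0
    linarith
  -- work function
  set W : Fin m → ℝ := fun i => ∑ j ∈ Finset.univ.filter (fun j => σ j = i), p j with hWdef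
  have hW0 : ∀ i, 0 ≤ W i := fun i => Finset.sum_nonneg fun j _ => hp0 j
  have hWL : ∀ i, W i = s i * L i := by
    intro i
    rw [hL i, mul_div_cancel₀ _ (hspos i).ne']
  have hsumW : ∑ i, W i = Q := by
    rw [hQdef, hWdef]
    exact Finset.sum_fiberwise_of_maps_to (fun j _ => Finset.mem_univ (σ j)) p
  have hL0 : ∀ i, 0 ≤ L i := fun i => by
    rw [hL i]; exact div_nonneg (Finset.sum_nonneg fun j _ => hp0 j) (hspos i).le
  -- critical machine
  obtain ⟨istar, histar⟩ := Finite.exists_max L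
  have hCmax : (⨆ i, L i) = L istar :=
    le_antisymm (ciSup_le histar) (le_ciSup (Finite.bddAbove_range L) istar)
  -- Copt nonneg
  have hCopt0 : 0 ≤ Copt := by
    rw [hCopt]
    refine le_ciInf fun τ => ?_
    set f : Fin m → ℝ := fun i => (∑ j ∈ Finset.univ.filter (fun j => τ j = i), p j) / s i
      with hfdef
    have h1 : (0:ℝ) ≤ f ⟨0, hm⟩ :=
      div_nonneg (Finset.sum_nonneg fun j _ => hp0 j) (hspos _).le
    exact h1.trans (le_ciSup (Finite.bddAbove_range f) (⟨0, hm⟩ : Fin m))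
  rw [hCmax]
  rcases le_or_gt (L istar) 0 with hCle | hCpos
  · exact (div_nonpos_of_nonpos_of_nonneg hCle hCopt0).trans hRHS0
  -- main case: positive makespan
  -- there is a job on the critical machine
  have hWstar : W istar = s istar * L istar := hWL istar
  have hWstarpos : 0 < W istar := by
    rw [hWstar]; exact mul_pos (hspos istar) hCpos
  have hexj : ∃ jstar : Fin n, σ jstar = istar := by
    by_contra h
    push_neg at h
    have : W istar = 0 := by
      rw [hWdef]
      apply Finset.sum_eq_zero
      intro j hj
      simp only [Finset.mem_filter] at hj
      exact absurd hj.2 (h j)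
    linarith
  obtain ⟨jstar, hjstar⟩ := hexj
  have hpj0 : 0 ≤ p jstar := hp0 jstar
  have hpj1 : p jstar ≤ 1 := hp1 jstar
  have hpjW : p jstar ≤ W istar := by
    rw [hWdef]
    exact Finset.single_le_sum (fun j _ => hp0 j) (by simp [hjstar])
  have hQpos : 0 < Q := by
    have : W istar ≤ Q := by
      rw [← hsumW]
      exact Finset.single_le_sum (fun i _ => hW0 i) (Finset.mem_univ istar)
    linarith
  -- jump inequality, multiplied out
  have hper : ∀ i : Fin m, i ≠ istar → s i * L istar ≤ W i + p jstar := by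
    intro i hi
    have hj := hjump jstar i (fun i'' => by rw [hjstar]; exact histar i'') (by rw [hjstar]; exact hi)
    rw [hjstar] at hj
    have hsi := hspos i
    have : L istar ≤ (W i + p jstar) / s i := by
      rw [hL i] at hj
      rw [add_div]
      exact hj
    calc s i * L istar ≤ s i * ((W i + p jstar) / s i) :=
          mul_le_mul_of_nonneg_left this hsi.le
      _ = W i + p jstar := by field_simp
  -- the set U of the k := min n m fastest machines
  set k : ℕ := min n m with hkdef
  have hk1 : 1 ≤ k := le_min hn hm
  have hkm : k ≤ m := min_le_right n m
  have hkn : k ≤ n := min_le_left n m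
  obtain ⟨U, hUmem, hUmax⟩ := Finset.exists_max_image
    ((Finset.univ : Finset (Fin m)).powersetCard k) (fun t => ∑ i ∈ t, s i)
    (Finset.powersetCard_nonempty.mpr (by simpa using hkm))
  obtain ⟨hUsub, hUcard⟩ := Finset.mem_powersetCard.mp hUmem
  set SU : ℝ := ∑ i ∈ U, s i with hSUdef
  have hUne : U.Nonempty := Finset.card_pos.mp (by omega)
  have hSUpos : 0 < SU := Finset.sum_pos (fun i _ => hspos i) hUne
  -- Copt lower bound: Q / SU ≤ Copt
  have hCoptQ : Q / SU ≤ Copt := by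
    rw [hCopt]
    refine le_ciInf fun τ => ?_
    set f : Fin m → ℝ := fun i => (∑ j ∈ Finset.univ.filter (fun j => τ j = i), p j) / s i
      with hfdef
    set M : ℝ := ⨆ i, f i with hMdef
    have hMi : ∀ i, f i ≤ M := fun i => le_ciSup (Finite.bddAbove_range f) i
    have hM0 : 0 ≤ M :=
      le_trans (div_nonneg (Finset.sum_nonneg fun j _ => hp0 j) (hspos ⟨0, hm⟩).le)
        (hMi ⟨0, hm⟩)
    set V : Finset (Fin m) := Finset.image τ Finset.univ with hVdef
    have hVcard : V.card ≤ k := by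
      refine le_min ?_ ?_
      · exact le_trans Finset.card_image_le (by simp)
      · exact le_trans (Finset.card_le_univ V) (by simp)
    obtain ⟨V', hVV', hV'sub, hV'card⟩ :=
      Finset.exists_subsuperset_card_eq (Finset.subset_univ V) hVcard (by simpa using hkm)
    have hSV' : ∑ i ∈ V', s i ≤ SU :=
      hUmax V' (Finset.mem_powersetCard.mpr ⟨hV'sub, hV'card⟩)
    have hQeq : Q = ∑ i ∈ V', f i * s i := by
      have hfi : ∀ i, f i * s i = ∑ j ∈ Finset.univ.filter (fun j => τ j = i), p j := by
        intro i
        rw [hfdef]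
        exact div_mul_cancel₀ _ (hspos i).ne'
      simp only [hfi]
      rw [hQdef, ← Finset.sum_fiberwise_of_maps_to (fun j _ => Finset.mem_univ (τ j)) p]
      refine (Finset.sum_subset (Finset.subset_univ V') ?_).symm
      intro i _ hi
      apply Finset.sum_eq_zero
      intro j hj
      simp only [Finset.mem_filter] at hj
      exact absurd (hVV' (Finset.mem_image.mpr ⟨j, Finset.mem_univ j, hj.2⟩)) hi
    have hQle : Q ≤ SU * M := by
      rw [hQeq]
      calc ∑ i ∈ V', f i * s i
          ≤ ∑ i ∈ V', M * s i := by
            refine Finset.sum_le_sum fun i _ => ?_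
            exact mul_le_mul_of_nonneg_right (hMi i) (hspos i).le
        _ = (∑ i ∈ V', s i) * M := by rw [← Finset.mul_sum, mul_comm]
        _ ≤ SU * M := mul_le_mul_of_nonneg_right hSV' hM0
    rw [div_le_iff₀ hSUpos]
    linarith [hQle]
  -- key upper bound: SU * L istar ≤ Q + (n - 1)
  have hkR : (k : ℝ) ≤ (n : ℝ) := by exact_mod_cast hkn
  have hkey : SU * L istar ≤ Q + ((n:ℝ) - 1) := by
    have hsumU : ∑ i ∈ U, W i ≤ Q := by
      rw [← hsumW]
      exact Finset.sum_le_sum_of_subset_of_nonneg hUsub (fun i _ _ => hW0 i)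
    by_cases hstarU : istar ∈ U
    · have hsplit : ∑ i ∈ U, s i * L istar
          = s istar * L istar + ∑ i ∈ U.erase istar, s i * L istar :=
        (Finset.add_sum_erase U (fun i => s i * L istar) hstarU).symm
      have hbound : ∑ i ∈ U.erase istar, s i * L istar
          ≤ ∑ i ∈ U.erase istar, (W i + p jstar) := by
        refine Finset.sum_le_sum fun i hi => ?_
        exact hper i (Finset.ne_of_mem_erase hi)
      have hcarde : (U.erase istar).card = k - 1 := by
        rw [Finset.card_erase_of_mem hstarU, hUcard]
      have hkR1 : ((k:ℝ) - 1) * p jstar ≤ (n:ℝ) - 1 := by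
        have h1 : ((k:ℝ) - 1) * p jstar ≤ ((k:ℝ) - 1) * 1 := by
          have : (0:ℝ) ≤ (k:ℝ) - 1 := by
            have : (1:ℝ) ≤ (k:ℝ) := by exact_mod_cast hk1
            linarith
          exact mul_le_mul_of_nonneg_left hpj1 this
        nlinarith
      have hsum2 : ∑ i ∈ U.erase istar, (W i + p jstar)
          = (∑ i ∈ U.erase istar, W i) + ((k:ℝ) - 1) * p jstar := by
        rw [Finset.sum_add_distrib, Finset.sum_const, hcarde, nsmul_eq_mul]
        congr 2
        have : (1:ℕ) ≤ k := hk1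
        push_cast [Nat.cast_sub this]
        ring
      have hWerase : s istar * L istar + ∑ i ∈ U.erase istar, W i = ∑ i ∈ U, W i := by
        rw [← hWstar]
        exact Finset.add_sum_erase U W hstarU
      calc SU * L istar = ∑ i ∈ U, s i * L istar := by rw [hSUdef, Finset.sum_mul]
        _ = s istar * L istar + ∑ i ∈ U.erase istar, s i * L istar := hsplit
        _ ≤ s istar * L istar + ((∑ i ∈ U.erase istar, W i) + ((k:ℝ) - 1) * p jstar) := by
            rw [← hsum2]; linarith [hbound]
        _ = (∑ i ∈ U, W i) + ((k:ℝ) - 1) * p jstar := by rw [← hWerase]; ring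
        _ ≤ Q + ((n:ℝ) - 1) := by linarith
    · -- istar ∉ U
      have hbound : ∑ i ∈ U, s i * L istar ≤ ∑ i ∈ U, (W i + p jstar) := by
        refine Finset.sum_le_sum fun i hi => ?_
        exact hper i (fun h => hstarU (h ▸ hi))
      have hsumU' : ∑ i ∈ U, W i ≤ Q - W istar := by
        have h1 : ∑ i ∈ insert istar U, W i ≤ Q := by
          rw [← hsumW]
          exact Finset.sum_le_sum_of_subset_of_nonneg (Finset.subset_univ _)
            (fun i _ _ => hW0 i)
        rw [Finset.sum_insert hstarU] at h1
        linarith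
      have hsum2 : ∑ i ∈ U, (W i + p jstar)
          = (∑ i ∈ U, W i) + (k:ℝ) * p jstar := by
        rw [Finset.sum_add_distrib, Finset.sum_const, hUcard, nsmul_eq_mul]
      have hkR1 : ((k:ℝ) - 1) * p jstar ≤ (n:ℝ) - 1 := by
        have : (1:ℝ) ≤ (k:ℝ) := by exact_mod_cast hk1
        nlinarith
      calc SU * L istar = ∑ i ∈ U, s i * L istar := by rw [hSUdef, Finset.sum_mul]
        _ ≤ (∑ i ∈ U, W i) + (k:ℝ) * p jstar := by rw [← hsum2]; exact hbound
        _ ≤ (Q - W istar) + (k:ℝ) * p jstar := by linarith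
        _ ≤ (Q - p jstar) + (k:ℝ) * p jstar := by linarith
        _ = Q + ((k:ℝ) - 1) * p jstar := by ring
        _ ≤ Q + ((n:ℝ) - 1) := by linarith
  -- conclude
  have hCoptpos : 0 < Copt := lt_of_lt_of_le (div_pos hQpos hSUpos) hCoptQ
  rw [div_le_iff₀ hCoptpos]
  have hfac : (0:ℝ) ≤ 1 + ((n:ℝ) - 1) / Q := hRHS0
  have h1 : (1 + ((n:ℝ) - 1) / Q) * (Q / SU) ≤ (1 + ((n:ℝ) - 1) / Q) * Copt :=
    mul_le_mul_of_nonneg_left hCoptQ hfac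
  have h2 : (1 + ((n:ℝ) - 1) / Q) * (Q / SU) = (Q + ((n:ℝ) - 1)) / SU := by
    field_simp
  have h3 : L istar ≤ (Q + ((n:ℝ) - 1)) / SU := by
    rw [le_div_iff₀ hSUpos]
    linarith [hkey]
  linarith
end

section
/- In any near list schedule σ (with machines sorted by nonincreasing speed s₁ ≥ ... ≥ sₘ), machine 1 belongs to the highest class H_c, i.e., L₁ ≥ c·C*_max where c = ⌊C_max(σ)/C*_max⌋ − 1. -/
/-- In any near list schedule σ (machines sorted by nonincreasing speed),
machine 1 belongs to the highest class H_c, i.e. L₁ ≥ c·C*_max where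
c = ⌊C_max(σ)/C*_max⌋ − 1. -/
theorem near_list_schedule_first_machine_in_top_class
    (m n : ℕ) (hm : 0 < m) (hn : 0 < n)
    (s : Fin m → ℝ) (hspos : ∀ i, 0 < s i)
    (hsorted : ∀ i i' : Fin m, i ≤ i' → s i' ≤ s i)
    (p : Fin n → ℝ) (hp0 : ∀ j, 0 ≤ p j)
    (σ : Fin n → Fin m)
    (L : Fin m → ℝ)
    (hL : ∀ i, L i = (∑ j ∈ Finset.univ.filter (fun j => σ j = i), p j) / s i)
    (hNL : ∀ (j : Fin n) (i' : Fin m), i' ≠ σ j →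
      L (σ j) - (∑ ℓ ∈ Finset.univ.filter (fun ℓ => σ ℓ = σ j ∧ ℓ < j), p ℓ) / s (σ j)
        ≤ L i' + p j / s i')
    (Cmax Copt : ℝ)
    (hCmax : Cmax = ⨆ i, L i)
    (hCopt : Copt = ⨅ τ : Fin n → Fin m,
      ⨆ i, (∑ j ∈ Finset.univ.filter (fun j => τ j = i), p j) / s i)
    (c : ℤ) (hc : c = ⌊Cmax / Copt⌋ - 1)
    (hcontrib : ∀ j, p j / s ⟨0, hm⟩ ≤ Copt) :
    (c : ℝ) * Copt ≤ L ⟨0, hm⟩ := by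
  have hL0pos : 0 < s ⟨0, hm⟩ := hspos _
  have hLnn : ∀ i, 0 ≤ L i := by
    intro i
    rw [hL]
    exact div_nonneg (Finset.sum_nonneg fun j _ => hp0 j) (hspos i).le
  have hne : Nonempty (Fin m) := ⟨⟨0, hm⟩⟩
  have hCoptnn : 0 ≤ Copt := by
    rw [hCopt]
    apply le_ciInf
    intro τ
    have hb : BddAbove (Set.range fun i =>
        (∑ j ∈ Finset.univ.filter (fun j => τ j = i), p j) / s i) :=
      (Set.finite_range _).bddAbove
    refine le_trans ?_ (le_ciSup hb ⟨0, hm⟩)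
    exact div_nonneg (Finset.sum_nonneg fun j _ => hp0 j) (hspos _).le
  obtain ⟨i0, hi0⟩ := Finite.exists_max L
  have hCmaxEq : Cmax = L i0 := by
    rw [hCmax]
    exact le_antisymm (ciSup_le hi0) (le_ciSup (Set.finite_range L).bddAbove i0)
  rcases eq_or_lt_of_le hCoptnn with h0 | hpos
  · -- Copt = 0 : all jobs are zero
    have hp : ∀ j, p j = 0 := by
      intro j
      have h1 := hcontrib j
      rw [← h0] at h1
      have h2 : 0 ≤ p j / s ⟨0, hm⟩ := div_nonneg (hp0 j) hL0pos.le
      have h3 : p j / s ⟨0, hm⟩ = 0 := le_antisymm h1 h2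
      field_simp at h3
      simpa using h3
    have hLz : L ⟨0, hm⟩ = 0 := by rw [hL]; simp [hp]
    rw [← h0, hLz]
    simp
  · -- Copt > 0
    have key : Cmax - Copt ≤ L ⟨0, hm⟩ := by
      by_cases h1 : i0 = ⟨0, hm⟩
      · rw [hCmaxEq, h1]; linarith
      · set S := Finset.univ.filter (fun j => σ j = i0) with hS
        by_cases hSe : S.Nonempty
        · obtain ⟨j, hjS, hjmin⟩ := S.exists_min_image id hSe
          have hσj : σ j = i0 := by
            simpa [hS] using hjS
          have hnl := hNL j ⟨0, hm⟩ (by rw [hσj]; exact fun h => h1 h.symm)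
          have hempty : (Finset.univ.filter (fun ℓ => σ ℓ = σ j ∧ ℓ < j)) = ∅ := by
            ext ℓ
            simp only [Finset.mem_filter, Finset.mem_univ, true_and, Finset.notMem_empty,
              iff_false, not_and]
            intro hℓ
            have hℓS : ℓ ∈ S := by simp [hS, hℓ, hσj]
            exact not_lt_of_ge (hjmin ℓ hℓS)
          rw [hempty] at hnl
          simp at hnl
          rw [hσj] at hnl
          have := hcontrib j
          rw [hCmaxEq]
          linarith
        · have : L i0 = 0 := by
            rw [hL]
            rw [Finset.not_nonempty_iff_eq_empty] at hSe
            rw [← hS, hSe]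
            simp
          rw [hCmaxEq, this]
          linarith [hLnn ⟨0, hm⟩]
    have hcle : (c : ℝ) ≤ Cmax / Copt - 1 := by
      rw [hc]
      push_cast
      have := Int.floor_le (Cmax / Copt)
      linarith
    have hmul : (c : ℝ) * Copt ≤ (Cmax / Copt - 1) * Copt :=
      mul_le_mul_of_nonneg_right hcle hCoptnn
    have hdm : Cmax / Copt * Copt = Cmax := div_mul_cancel₀ Cmax hpos.ne'
    nlinarith
end

section
/- Let σ be a near list schedule with classes H_k defined by the machine loads, let k₁ > k₂ and t ≤ k₁ be positive integers, let i₁ ∈ H_{k₁} and i₂ ∉ H_{k₂}, and let j be a job on machine i₁ belonging to J_{i₁,≥t} (the minimal prefix of jobs on i₁ contributing at least t·C*_max to its load). Then pⱼ/s_{i₂} > (k₁ − k₂ − t)·C*_max. -/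
/-- For a near list schedule, i₁ ∈ H_{k₁}, i₂ ∉ H_{k₂} (k₁ > k₂, 0 < t ≤ k₁)
and j ∈ J_{i₁,≥t}, we have pⱼ/s_{i₂} > (k₁ − k₂ − t)·C*_max. -/
theorem near_list_schedule_main_lemma
    (m n : ℕ) (hm : 0 < m) (hn : 0 < n)
    (s : Fin m → ℝ) (hspos : ∀ i, 0 < s i)
    (hsorted : ∀ i i' : Fin m, i ≤ i' → s i' ≤ s i)
    (p : Fin n → ℝ) (hp0 : ∀ j, 0 ≤ p j)
    (σ : Fin n → Fin m)
    (L : Fin m → ℝ)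
    (hL : ∀ i, L i = (∑ j ∈ Finset.univ.filter (fun j => σ j = i), p j) / s i)
    (hNL : ∀ (j : Fin n) (i' : Fin m), i' ≠ σ j →
      L (σ j) - (∑ ℓ ∈ Finset.univ.filter (fun ℓ => σ ℓ = σ j ∧ ℓ < j), p ℓ) / s (σ j)
        ≤ L i' + p j / s i')
    (Cmax Copt : ℝ)
    (hCmax : Cmax = ⨆ i, L i)
    (hCopt : Copt = ⨅ τ : Fin n → Fin m,
      ⨆ i, (∑ j ∈ Finset.univ.filter (fun j => τ j = i), p j) / s i)
    (c : ℤ) (hc : c = ⌊Cmax / Copt⌋ - 1)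
    (H : ℤ → Finset (Fin m))
    (hH : ∀ k : ℤ, H k = Finset.univ.filter (fun i => ∀ i' ≤ i, (k : ℝ) * Copt ≤ L i'))
    (k₁ k₂ t : ℤ) (hk : k₂ < k₁) (ht : 0 < t) (htk : t ≤ k₁)
    (i₁ i₂ : Fin m) (hi₁ : i₁ ∈ H k₁) (hi₂ : i₂ ∉ H k₂)
    (j : Fin n) (hj : σ j = i₁)
    (hjt : (∑ ℓ ∈ Finset.univ.filter (fun ℓ => σ ℓ = i₁ ∧ ℓ < j), p ℓ) / s i₁
      < (t : ℝ) * Copt) :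
    ((k₁ - k₂ - t : ℤ) : ℝ) * Copt < p j / s i₂ := by

  -- Copt ≥ 0
  have hCopt0 : 0 ≤ Copt := by
    rw [hCopt]
    apply Real.iInf_nonneg
    intro τ
    apply Real.iSup_nonneg
    intro i
    exact div_nonneg (Finset.sum_nonneg fun ℓ _ => hp0 ℓ) (hspos i).le
  -- unpack hi₁ and hi₂
  rw [hH k₁, Finset.mem_filter] at hi₁
  rw [hH k₂, Finset.mem_filter] at hi₂
  push_neg at hi₂
  obtain ⟨i', hi'le, hi'L⟩ := hi₂ (Finset.mem_univ i₂)
  have hk12 : (k₂ : ℝ) * Copt ≤ (k₁ : ℝ) * Copt := by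
    apply mul_le_mul_of_nonneg_right _ hCopt0
    exact_mod_cast hk.le
  have hi'ne : i' ≠ i₁ := by
    intro h
    exact absurd (hi₁.2 i' (h ▸ le_refl i')) (by linarith)
  have hnl := hNL j i' (by rw [hj]; exact hi'ne)
  rw [hj] at hnl
  have hL1 : (k₁ : ℝ) * Copt ≤ L i₁ := hi₁.2 i₁ le_rfl
  have hsi' : s i₂ ≤ s i' := hsorted i' i₂ hi'le
  have hdiv : p j / s i' ≤ p j / s i₂ :=
    div_le_div_of_nonneg_left (hp0 j) (hspos i₂) hsi'
  have key : ((k₁ - k₂ - t : ℤ) : ℝ) * Copt < p j / s i' := by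
    push_cast
    nlinarith [hspos i₁, hspos i']
  linarith
end

section
/- In any near list schedule, for positive integers t ≤ k, the total processing requirement assigned by any optimal schedule to machines in H_{k−t−1} \ H_k is at least Σ_{k'=k}^{c} Σ_{i ∈ R_{k'}} (t + k' − k − 1)·sᵢ·C*_max, where R_{k'} = H_{k'} \ H_{k'+1} for k' < c and R_c = H_c. -/
/-- Prefix processing (before job `j`) on machine `i` in schedule `σ`. -/
private def preS {n m : ℕ} (σ : Fin n → Fin m) (p : Fin n → ℝ) (i : Fin m) (j : Fin n) : ℝ :=
  ∑ ℓ ∈ Finset.univ.filter (fun ℓ => σ ℓ = i ∧ ℓ < j), p ℓ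

/-- Threshold value `(L i − (k − t)·C)·s i`. -/
private def thS {m : ℕ} (L s : Fin m → ℝ) (C : ℝ) (k t : ℤ) (i : Fin m) : ℝ :=
  (L i - ((k : ℝ) - (t : ℝ)) * C) * s i

private lemma aux_partition {α : Type*} [DecidableEq α] (H : ℤ → Finset α) (f : α → ℝ)
    (hmono : ∀ a : ℤ, H (a + 1) ⊆ H a) (c : ℤ) :
    ∀ k : ℤ, k ≤ c →
      (∑ k' ∈ Finset.Icc k c, ∑ i ∈ (if k' = c then H c else H k' \ H (k' + 1)), f i)
        = ∑ i ∈ H k, f i := by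
  refine Int.le_induction_down ?_ ?_
  · simp [Finset.Icc_self]
  · intro n hn IH
    have hne : (n - 1 : ℤ) ≠ c := by omega
    have hins : Finset.Icc (n - 1) c = insert (n - 1) (Finset.Icc n c) := by
      ext x; simp only [Finset.mem_Icc, Finset.mem_insert]; omega
    have hnotmem : (n - 1 : ℤ) ∉ Finset.Icc n c := by simp only [Finset.mem_Icc]; omega
    rw [hins, Finset.sum_insert hnotmem, IH, if_neg hne]
    have h1 : H (n - 1 + 1) ⊆ H (n - 1) := hmono (n - 1)
    rw [show (n - 1 + 1 : ℤ) = n by ring] at h1 ⊢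
    exact Finset.sum_sdiff (f := f) h1

/-- Job redistribution: in any optimal schedule the total processing
requirement on machines in H_{k−t−1} \ H_k is at least
Σ_{k'=k}^{c} Σ_{i ∈ R_{k'}} (t + k' − k − 1)·sᵢ·C*_max. -/
theorem near_list_schedule_job_redistribution
    (m n : ℕ) (hm : 0 < m) (hn : 0 < n)
    (s : Fin m → ℝ) (hspos : ∀ i, 0 < s i)
    (hsorted : ∀ i i' : Fin m, i ≤ i' → s i' ≤ s i)
    (p : Fin n → ℝ) (hp0 : ∀ j, 0 ≤ p j)
    (σ : Fin n → Fin m)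
    (L : Fin m → ℝ)
    (hL : ∀ i, L i = (∑ j ∈ Finset.univ.filter (fun j => σ j = i), p j) / s i)
    (hNL : ∀ (j : Fin n) (i' : Fin m), i' ≠ σ j →
      L (σ j) - (∑ ℓ ∈ Finset.univ.filter (fun ℓ => σ ℓ = σ j ∧ ℓ < j), p ℓ) / s (σ j)
        ≤ L i' + p j / s i')
    (Cmax Copt : ℝ)
    (hCmax : Cmax = ⨆ i, L i)
    (hCopt : Copt = ⨅ τ : Fin n → Fin m,
      ⨆ i, (∑ j ∈ Finset.univ.filter (fun j => τ j = i), p j) / s i)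
    (c : ℤ) (hc : c = ⌊Cmax / Copt⌋ - 1)
    (H : ℤ → Finset (Fin m))
    (hH : ∀ k : ℤ, H k = Finset.univ.filter (fun i => ∀ i' ≤ i, (k : ℝ) * Copt ≤ L i'))
    (R : ℤ → Finset (Fin m))
    (hR : ∀ k' : ℤ, R k' = if k' = c then H c else H k' \ H (k' + 1))
    (τ : Fin n → Fin m)
    (hτ : (⨆ i, (∑ j ∈ Finset.univ.filter (fun j => τ j = i), p j) / s i) = Copt)
    (k t : ℤ) (ht : 1 ≤ t) (htk : t ≤ k) :
    ∑ k' ∈ Finset.Icc k c, ∑ i ∈ R k', ((t + k' - k - 1 : ℤ) : ℝ) * s i * Copt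
      ≤ ∑ j ∈ Finset.univ.filter (fun j => τ j ∈ H (k - t - 1) \ H k), p j := by
  classical
  have hsne : ∀ i, s i ≠ 0 := fun i => (hspos i).ne'
  have htR : (1 : ℝ) ≤ (t : ℝ) := by exact_mod_cast ht
  have htkR : (t : ℝ) ≤ (k : ℝ) := by exact_mod_cast htk
  -- RHS is nonnegative
  have hRHS0 : 0 ≤ ∑ j ∈ Finset.univ.filter (fun j => τ j ∈ H (k - t - 1) \ H k), p j :=
    Finset.sum_nonneg fun j _ => hp0 j
  -- every τ-load is at most Copt
  have hle : ∀ i, (∑ j ∈ Finset.univ.filter (fun j => τ j = i), p j) / s i ≤ Copt := by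
    intro i
    rw [← hτ]
    exact le_ciSup ((Set.finite_range (fun i : Fin m =>
      (∑ j ∈ Finset.univ.filter (fun j => τ j = i), p j) / s i)).bddAbove) i
  have hC0 : 0 ≤ Copt := by
    refine le_trans ?_ (hle ⟨0, hm⟩)
    exact div_nonneg (Finset.sum_nonneg fun j _ => hp0 j) (hspos _).le
  have hcap : ∀ i, (∑ j ∈ Finset.univ.filter (fun j => τ j = i), p j) ≤ s i * Copt := by
    intro i
    rw [mul_comm]
    exact (div_le_iff₀ (hspos i)).mp (hle i)
  have hHmem : ∀ (a : ℤ) (i : Fin m), i ∈ H a ↔ ∀ i' ≤ i, (a : ℝ) * Copt ≤ L i' := by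
    intro a i; rw [hH a]; simp
  have hHmono : ∀ a : ℤ, H (a + 1) ⊆ H a := by
    intro a i hi
    rw [hHmem] at hi ⊢
    intro i' hi'
    have h1 := hi i' hi'
    have h2 : (a : ℝ) * Copt ≤ ((a + 1 : ℤ) : ℝ) * Copt := by push_cast; nlinarith
    linarith
  -- main case split
  rcases lt_or_ge c k with hkc | hkc
  · rw [Finset.Icc_eq_empty (not_le.mpr hkc), Finset.sum_empty]
    exact hRHS0
  -- definitions
  set Gi : Fin m → Finset (Fin n) :=
    fun i => Finset.univ.filter (fun j => σ j = i ∧ preS σ p i j ≤ thS L s Copt k t i) with hGi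
  set G : Finset (Fin n) :=
    Finset.univ.filter (fun j => σ j ∈ H k ∧ preS σ p (σ j) j ≤ thS L s Copt k t (σ j)) with hG
  -- Fact (iii): each machine carries a lot of "late" processing
  have h_fact3 : ∀ i : Fin m, thS L s Copt k t i ≤ ∑ j ∈ Gi i, p j := by
    intro i
    have hA : (Finset.univ.filter (fun j => σ j = i)).filter
        (fun j => preS σ p i j ≤ thS L s Copt k t i) = Gi i := by
      rw [hGi, Finset.filter_filter]
    set A := Finset.univ.filter (fun j => σ j = i) with hAdef
    set B := A.filter (fun j => ¬ preS σ p i j ≤ thS L s Copt k t i) with hBdef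
    have hsplit : (∑ j ∈ Gi i, p j) + ∑ j ∈ B, p j = ∑ j ∈ A, p j := by
      rw [← hA]
      exact Finset.sum_filter_add_sum_filter_not A _ p
    have htotA : ∑ j ∈ A, p j = L i * s i := by
      rw [hAdef, hL i, div_mul_cancel₀ _ (hsne i)]
    by_cases hB : B.Nonempty
    · set j₀ := B.min' hB with hj0
      have hj₀B : j₀ ∈ B := B.min'_mem hB
      have hj₀B' := hj₀B
      rw [hBdef, Finset.mem_filter] at hj₀B'
      have hθj₀ : thS L s Copt k t i < preS σ p i j₀ := not_le.mp hj₀B'.2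
      have hsub : B ⊆ A.filter (fun j => ¬ j < j₀) := by
        intro j hj
        have hj' := hj
        rw [hBdef, Finset.mem_filter] at hj'
        exact Finset.mem_filter.mpr ⟨hj'.1, not_lt.mpr (Finset.min'_le B j hj)⟩
      have hBle : ∑ j ∈ B, p j ≤ ∑ j ∈ A.filter (fun j => ¬ j < j₀), p j :=
        Finset.sum_le_sum_of_subset_of_nonneg hsub (fun j _ _ => hp0 j)
      have hsplit2 : (∑ j ∈ A.filter (fun j => j < j₀), p j)
          + ∑ j ∈ A.filter (fun j => ¬ j < j₀), p j = ∑ j ∈ A, p j :=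
        Finset.sum_filter_add_sum_filter_not A _ p
      have hpre : ∑ j ∈ A.filter (fun j => j < j₀), p j = preS σ p i j₀ := by
        rw [hAdef, Finset.filter_filter]
        rfl
      linarith
    · have hBe : B = ∅ := Finset.not_nonempty_iff_eq_empty.mp hB
      rw [hBe, Finset.sum_empty, add_zero] at hsplit
      rw [hsplit, htotA]
      unfold thS
      nlinarith [mul_nonneg (mul_nonneg (by linarith : (0:ℝ) ≤ (k : ℝ) - (t : ℝ)) hC0)
        (hspos i).le]
  -- Fact (i): every job in G is assigned by τ to H (k - t - 1)
  have h_fact1 : ∀ j ∈ G, τ j ∈ H (k - t - 1) := by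
    intro j hj
    rw [hG, Finset.mem_filter] at hj
    obtain ⟨-, hjH, hjpre⟩ := hj
    have hpj : p j ≤ s (τ j) * Copt := by
      have h1 : p j ≤ ∑ ℓ ∈ Finset.univ.filter (fun ℓ => τ ℓ = τ j), p ℓ :=
        Finset.single_le_sum (f := p) (fun ℓ _ => hp0 ℓ) (by simp)
      exact le_trans h1 (hcap (τ j))
    rw [hHmem]
    intro i' hi'
    have hsle : s (τ j) ≤ s i' := hsorted i' (τ j) hi'
    have hpj' : p j / s i' ≤ Copt := by
      rw [div_le_iff₀ (hspos i')]
      nlinarith [hspos (τ j), hspos i']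
    have hdiv : preS σ p (σ j) j / s (σ j) ≤ L (σ j) - ((k : ℝ) - (t : ℝ)) * Copt := by
      rw [div_le_iff₀ (hspos (σ j))]
      exact hjpre
    by_cases hji : i' = σ j
    · rw [hji]
      have hLk : (k : ℝ) * Copt ≤ L (σ j) := (hHmem k (σ j)).mp hjH (σ j) le_rfl
      push_cast
      nlinarith [mul_nonneg (by linarith : (0:ℝ) ≤ (t : ℝ) + 1) hC0]
    · have hnl : L (σ j) - preS σ p (σ j) j / s (σ j) ≤ L i' + p j / s i' := hNL j i' hji
      push_cast
      linarith
  -- partition equality specialised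
  have hpart : (∑ k' ∈ Finset.Icc k c, ∑ i ∈ R k', ((∑ j ∈ Gi i, p j) - s i * Copt))
      = ∑ i ∈ H k, ((∑ j ∈ Gi i, p j) - s i * Copt) := by
    rw [← aux_partition H (fun i => (∑ j ∈ Gi i, p j) - s i * Copt) hHmono c k hkc]
    exact Finset.sum_congr rfl fun k' _ => by rw [hR k']
  -- G as a disjoint union of the Gi over H k
  have hGeq : G = (H k).biUnion Gi := by
    ext j
    rw [hG]
    simp only [Finset.mem_filter, Finset.mem_biUnion, Finset.mem_univ, true_and, hGi]
    constructor
    · rintro ⟨h1, h2⟩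
      exact ⟨σ j, h1, by simp [h2]⟩
    · rintro ⟨i, hiH, hji1, hji2⟩
      subst hji1
      exact ⟨hiH, hji2⟩
  have hdisj : (↑(H k) : Set (Fin m)).PairwiseDisjoint Gi := by
    intro a _ b _ hab
    refine Finset.disjoint_left.mpr fun j hj1 hj2 => hab ?_
    rw [hGi] at hj1 hj2
    simp only [Finset.mem_filter, Finset.mem_univ, true_and] at hj1 hj2
    rw [← hj1.1, hj2.1]
  have hGsum : ∑ j ∈ G, p j = ∑ i ∈ H k, ∑ j ∈ Gi i, p j := by
    rw [hGeq, Finset.sum_biUnion hdisj]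
  -- split G by whether τ sends the job inside H k
  have hsplitG : (∑ j ∈ G.filter (fun j => τ j ∈ H k), p j)
      + ∑ j ∈ G.filter (fun j => ¬ τ j ∈ H k), p j = ∑ j ∈ G, p j :=
    Finset.sum_filter_add_sum_filter_not G _ p
  have hdisj2 : (↑(H k) : Set (Fin m)).PairwiseDisjoint
      (fun i => Finset.univ.filter (fun j => τ j = i)) := by
    intro a _ b _ hab
    refine Finset.disjoint_left.mpr fun j hj1 hj2 => hab ?_
    simp only [Finset.mem_filter, Finset.mem_univ, true_and] at hj1 hj2
    rw [← hj1, hj2]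
  have ha : ∑ j ∈ G.filter (fun j => τ j ∈ H k), p j ≤ ∑ i ∈ H k, s i * Copt := by
    have h1 : G.filter (fun j => τ j ∈ H k) ⊆ Finset.univ.filter (fun j => τ j ∈ H k) := by
      intro j hj
      rw [Finset.mem_filter] at hj ⊢
      exact ⟨Finset.mem_univ j, hj.2⟩
    have h2 : ∑ j ∈ G.filter (fun j => τ j ∈ H k), p j
        ≤ ∑ j ∈ Finset.univ.filter (fun j => τ j ∈ H k), p j :=
      Finset.sum_le_sum_of_subset_of_nonneg h1 (fun j _ _ => hp0 j)
    have h3 : Finset.univ.filter (fun j => τ j ∈ H k)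
        = (H k).biUnion (fun i => Finset.univ.filter (fun j => τ j = i)) := by
      ext j
      simp only [Finset.mem_filter, Finset.mem_biUnion, Finset.mem_univ, true_and]
      constructor
      · intro hj; exact ⟨τ j, hj, rfl⟩
      · rintro ⟨i, hi, hji⟩; rw [hji]; exact hi
    rw [h3, Finset.sum_biUnion hdisj2] at h2
    exact le_trans h2 (Finset.sum_le_sum fun i _ => hcap i)
  have hb : ∑ j ∈ G.filter (fun j => ¬ τ j ∈ H k), p j
      ≤ ∑ j ∈ Finset.univ.filter (fun j => τ j ∈ H (k - t - 1) \ H k), p j := by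
    refine Finset.sum_le_sum_of_subset_of_nonneg ?_ (fun j _ _ => hp0 j)
    intro j hj
    rw [Finset.mem_filter] at hj
    rw [Finset.mem_filter]
    exact ⟨Finset.mem_univ j, Finset.mem_sdiff.mpr ⟨h_fact1 j hj.1, hj.2⟩⟩
  -- putting everything together
  calc ∑ k' ∈ Finset.Icc k c, ∑ i ∈ R k', ((t + k' - k - 1 : ℤ) : ℝ) * s i * Copt
      ≤ ∑ k' ∈ Finset.Icc k c, ∑ i ∈ R k', ((∑ j ∈ Gi i, p j) - s i * Copt) := by
        refine Finset.sum_le_sum fun k' _ => Finset.sum_le_sum fun i hi => ?_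
        have hiH : i ∈ H k' := by
          rw [hR k'] at hi
          split_ifs at hi with hcc
          · rw [hcc]; exact hi
          · exact (Finset.mem_sdiff.mp hi).1
        have hLi : (k' : ℝ) * Copt ≤ L i := (hHmem k' i).mp hiH i le_rfl
        have hWi := h_fact3 i
        unfold thS at hWi
        push_cast
        nlinarith [mul_nonneg (by linarith : (0:ℝ) ≤ L i - (k' : ℝ) * Copt) (hspos i).le]
    _ = ∑ i ∈ H k, ((∑ j ∈ Gi i, p j) - s i * Copt) := hpart
    _ = (∑ i ∈ H k, ∑ j ∈ Gi i, p j) - ∑ i ∈ H k, s i * Copt := Finset.sum_sub_distrib _ _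
    _ = (∑ j ∈ G, p j) - ∑ i ∈ H k, s i * Copt := by rw [hGsum]
    _ ≤ ∑ j ∈ Finset.univ.filter (fun j => τ j ∈ H (k - t - 1) \ H k), p j := by
        linarith
end

section
/- In any near list schedule, for any k ∈ {1,...,c−1}, the set H_{k−2} \ H_k is nonempty, i.e., there is no pair of consecutive empty machine classes below the top class. -/
lemma prefix_cover {n : ℕ} (p : Fin n → ℝ) (hp : ∀ j, 0 ≤ p j)
    (P : Fin n → Prop) [DecidablePred P] (W : ℝ)
    (hW : W ≤ ∑ j ∈ Finset.univ.filter P, p j) :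
    W ≤ ∑ j ∈ Finset.univ.filter
        (fun j => P j ∧ (∑ ℓ ∈ Finset.univ.filter (fun ℓ => P ℓ ∧ ℓ < j), p ℓ) ≤ W), p j := by
  set q : Fin n → ℝ := fun j => ∑ ℓ ∈ Finset.univ.filter (fun ℓ => P ℓ ∧ ℓ < j), p ℓ with hq
  by_cases hT : (Finset.univ.filter (fun j => P j ∧ ¬ q j ≤ W)).Nonempty
  · set j₀ := (Finset.univ.filter (fun j => P j ∧ ¬ q j ≤ W)).min' hT with hj₀def
    have hj₀ := Finset.min'_mem _ hT
    simp only [Finset.mem_filter, Finset.mem_univ, true_and] at hj₀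
    have hsub : Finset.univ.filter (fun ℓ => P ℓ ∧ ℓ < j₀) ⊆
        Finset.univ.filter (fun j => P j ∧ q j ≤ W) := by
      intro ℓ hℓ
      simp only [Finset.mem_filter, Finset.mem_univ, true_and] at hℓ ⊢
      refine ⟨hℓ.1, ?_⟩
      by_contra hbad
      have hle : j₀ ≤ ℓ := Finset.min'_le _ ℓ (by
        simp only [Finset.mem_filter, Finset.mem_univ, true_and]
        exact ⟨hℓ.1, hbad⟩)
      exact absurd hℓ.2 (not_lt.mpr hle)
    have h1 : q j₀ ≤ ∑ j ∈ Finset.univ.filter (fun j => P j ∧ q j ≤ W), p j :=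
      Finset.sum_le_sum_of_subset_of_nonneg hsub (fun j _ _ => hp j)
    have h2 : W < q j₀ := not_le.mp hj₀.2
    exact (le_of_lt (h2.trans_le h1))
  · have : Finset.univ.filter (fun j => P j ∧ q j ≤ W) = Finset.univ.filter P := by
      apply Finset.filter_congr
      intro j _
      simp only [iff_iff_implies_and_implies]
      constructor
      · exact fun h => h.1
      · intro hPj
        refine ⟨hPj, ?_⟩
        by_contra hb
        exact hT ⟨j, by
          simp only [Finset.mem_filter, Finset.mem_univ, true_and]
          exact ⟨hPj, hb⟩⟩
    rw [this]
    exact hW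

/-- In any near list schedule, for any k ∈ {1,…,c−1}, H_{k−2} \ H_k ≠ ∅. -/
theorem near_list_schedule_no_two_consecutive_empty_classes
    (m n : ℕ) (hm : 0 < m) (hn : 0 < n)
    (s : Fin m → ℝ) (hspos : ∀ i, 0 < s i)
    (hsorted : ∀ i i' : Fin m, i ≤ i' → s i' ≤ s i)
    (p : Fin n → ℝ) (hp0 : ∀ j, 0 ≤ p j)
    (σ : Fin n → Fin m)
    (L : Fin m → ℝ)
    (hL : ∀ i, L i = (∑ j ∈ Finset.univ.filter (fun j => σ j = i), p j) / s i)
    (hNL : ∀ (j : Fin n) (i' : Fin m), i' ≠ σ j →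
      L (σ j) - (∑ ℓ ∈ Finset.univ.filter (fun ℓ => σ ℓ = σ j ∧ ℓ < j), p ℓ) / s (σ j)
        ≤ L i' + p j / s i')
    (Cmax Copt : ℝ)
    (hCmax : Cmax = ⨆ i, L i)
    (hCopt : Copt = ⨅ τ : Fin n → Fin m,
      ⨆ i, (∑ j ∈ Finset.univ.filter (fun j => τ j = i), p j) / s i)
    (c : ℤ) (hc : c = ⌊Cmax / Copt⌋ - 1)
    (H : ℤ → Finset (Fin m))
    (hH : ∀ k : ℤ, H k = Finset.univ.filter (fun i => ∀ i' ≤ i, (k : ℝ) * Copt ≤ L i'))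
    (hcontrib : ∀ j, p j / s ⟨0, hm⟩ ≤ Copt)
    (k : ℤ) (hk1 : 1 ≤ k) (hk2 : k ≤ c - 1) :
    (H (k - 2) \ H k).Nonempty := by
  haveI : Nonempty (Fin m) := ⟨⟨0, hm⟩⟩
  set i0 : Fin m := ⟨0, hm⟩ with hi0def
  -- basic positivity
  have hsne : ∀ i, s i ≠ 0 := fun i => ne_of_gt (hspos i)
  set load : (Fin n → Fin m) → Fin m → ℝ :=
    fun τ i => (∑ j ∈ Finset.univ.filter (fun j => τ j = i), p j) / s i with hloaddef
  have hload0 : ∀ τ i, 0 ≤ load τ i := fun τ i =>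
    div_nonneg (Finset.sum_nonneg fun j _ => hp0 j) (le_of_lt (hspos i))
  -- Copt is attained by some τ
  obtain ⟨τ, hτmin⟩ : ∃ τ : Fin n → Fin m, ∀ τ', (⨆ i, load τ i) ≤ ⨆ i, load τ' i :=
    Finite.exists_min _
  have hCopt_eq : Copt = ⨆ i, load τ i := by
    rw [hCopt]
    refine le_antisymm (ciInf_le (Set.finite_range _).bddBelow τ) (le_ciInf hτmin)
  have hτ_le : ∀ i, load τ i ≤ Copt := by
    intro i
    rw [hCopt_eq]
    exact le_ciSup (Set.finite_range _).bddAbove i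
  have hCopt0 : 0 ≤ Copt := le_trans (hload0 τ i0) (hτ_le i0)
  have hL_le : ∀ i, L i ≤ Cmax := by
    intro i
    rw [hCmax]
    exact le_ciSup (Set.finite_range _).bddAbove i
  have hLnn : ∀ i, 0 ≤ L i := by
    intro i; rw [hL i]
    exact div_nonneg (Finset.sum_nonneg fun j _ => hp0 j) (le_of_lt (hspos i))
  -- per-machine work identity
  have hwork : ∀ i, s i * L i = ∑ j ∈ Finset.univ.filter (fun j => σ j = i), p j := by
    intro i; rw [hL i]; exact mul_div_cancel₀ _ (hsne i)
  have hworkτ : ∀ i, ∑ j ∈ Finset.univ.filter (fun j => τ j = i), p j ≤ s i * Copt := by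
    intro i
    have := hτ_le i
    rw [hloaddef] at this
    calc ∑ j ∈ Finset.univ.filter (fun j => τ j = i), p j
        = s i * ((∑ j ∈ Finset.univ.filter (fun j => τ j = i), p j) / s i) := by
          rw [mul_comm, div_mul_cancel₀ _ (hsne i)]
      _ ≤ s i * Copt := by
          exact mul_le_mul_of_nonneg_left this (le_of_lt (hspos i))
  -- job size ≤ s (τ j) * Copt
  have hjob : ∀ j, p j ≤ s (τ j) * Copt := by
    intro j
    refine le_trans ?_ (hworkτ (τ j))
    exact Finset.single_le_sum (fun ℓ _ => hp0 ℓ) (by simp)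
  -- Copt > 0
  have hCoptpos : 0 < Copt := by
    by_contra hnp
    have hC0 : Copt = 0 := le_antisymm (not_lt.mp hnp) hCopt0
    have hp_eq : ∀ j, p j = 0 := by
      intro j
      have h := hjob j
      rw [hC0, mul_zero] at h
      exact le_antisymm h (hp0 j)
    have hLz : ∀ i, L i = 0 := by
      intro i
      rw [hL i]
      simp [hp_eq]
    have hCmaxz : Cmax = 0 := by
      rw [hCmax]
      have : (fun i : Fin m => L i) = fun _ => (0 : ℝ) := funext hLz
      rw [this, ciSup_const]
    have hcneg : c = -1 := by
      rw [hc, hCmaxz, hC0]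
      norm_num
    omega
  have hc2 : (2 : ℤ) ≤ c := by omega
  -- Cmax ≥ (c+1) * Copt
  have hCmax_ge : ((c : ℝ) + 1) * Copt ≤ Cmax := by
    have hfl : (⌊Cmax / Copt⌋ : ℝ) ≤ Cmax / Copt := Int.floor_le _
    have hcast : ((c : ℝ) + 1) = (⌊Cmax / Copt⌋ : ℝ) := by
      rw [hc]; push_cast; ring
    rw [hcast]
    calc (⌊Cmax / Copt⌋ : ℝ) * Copt ≤ (Cmax / Copt) * Copt :=
          mul_le_mul_of_nonneg_right hfl hCopt0
      _ = Cmax := div_mul_cancel₀ _ (ne_of_gt hCoptpos)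
  -- L of fastest machine ≥ c * Copt
  have hcR : (2 : ℝ) ≤ (c : ℝ) := by exact_mod_cast hc2
  have hL0 : (c : ℝ) * Copt ≤ L i0 := by
    obtain ⟨imax, himax⟩ : ∃ i, ∀ i', L i' ≤ L i := Finite.exists_max L
    have hCmax_eq : Cmax = L imax := by
      rw [hCmax]
      exact le_antisymm (ciSup_le himax) (le_ciSup (Set.finite_range _).bddAbove imax)
    by_cases hS : (Finset.univ.filter (fun j => σ j = imax)).Nonempty
    · set j₀ := (Finset.univ.filter (fun j => σ j = imax)).min' hS with hj₀def
      have hj₀mem := Finset.min'_mem _ hS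
      simp only [Finset.mem_filter, Finset.mem_univ, true_and] at hj₀mem
      have hpre : Finset.univ.filter (fun ℓ => σ ℓ = σ j₀ ∧ ℓ < j₀) = ∅ := by
        rw [Finset.filter_eq_empty_iff]
        intro ℓ _
        rintro ⟨h1, h2⟩
        have hle := Finset.min'_le (Finset.univ.filter (fun j => σ j = imax)) ℓ (by
          simp only [Finset.mem_filter, Finset.mem_univ, true_and]
          rw [← hj₀mem]; exact h1)
        exact absurd h2 (not_lt.mpr hle)
      by_cases him : imax = i0
      · rw [← him, ← hCmax_eq]
        nlinarith
      · have hne : i0 ≠ σ j₀ := by rw [hj₀mem]; exact fun h => him (h.symm)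
        have hnl := hNL j₀ i0 hne
        rw [hpre, Finset.sum_empty, zero_div, sub_zero, hj₀mem, ← hCmax_eq] at hnl
        have := hcontrib j₀
        nlinarith
    · have : L imax = 0 := by
        rw [hL imax, Finset.not_nonempty_iff_eq_empty.mp hS, Finset.sum_empty, zero_div]
      rw [← hCmax_eq] at this
      nlinarith
  -- main contradiction
  by_contra hcon
  rw [Finset.not_nonempty_iff_eq_empty, Finset.sdiff_eq_empty_iff_subset] at hcon
  -- H(k-2) ⊆ H k; so membership in H k iff in H (k-2)
  have hmem : ∀ i : Fin m, i ∈ H k ↔ ∀ i' ≤ i, (k : ℝ) * Copt ≤ L i' := by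
    intro i; rw [hH k]; simp
  have hmem2 : ∀ i : Fin m, i ∈ H (k-2) ↔ ∀ i' ≤ i, ((k : ℝ) - 2) * Copt ≤ L i' := by
    intro i; rw [hH (k-2)]; push_cast; simp
  have hkR : (1 : ℝ) ≤ (k : ℝ) := by exact_mod_cast hk1
  have hkc : (k : ℝ) ≤ (c : ℝ) - 1 := by exact_mod_cast hk2
  -- i0 ∈ H k
  have hi0mem : i0 ∈ H k := by
    rw [hmem]
    intro i' hi'
    have : i' = i0 := le_antisymm hi' (by exact Fin.mk_le_mk.mpr (Nat.zero_le _))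
    subst this
    calc (k : ℝ) * Copt ≤ (c : ℝ) * Copt := by nlinarith
      _ ≤ L i0 := hL0
  by_cases hall : ∀ i, i ∈ H k
  · -- all machines loaded ≥ k Copt : total work contradiction
    have hLk : ∀ i, (k : ℝ) * Copt ≤ L i := fun i => ((hmem i).mp (hall i)) i le_rfl
    have hsum1 : ∑ i, s i * L i = ∑ j, p j := by
      simp_rw [hwork]
      exact Finset.sum_fiberwise Finset.univ σ p
    have hsum2 : (∑ j, p j) ≤ ∑ i, s i * Copt := by
      rw [← Finset.sum_fiberwise Finset.univ τ p]
      exact Finset.sum_le_sum (fun i _ => hworkτ i)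
    have hterm : ∀ i : Fin m, 0 ≤ s i * (L i - Copt) := by
      intro i
      have h1 := hLk i
      have h2 := hspos i
      nlinarith [mul_nonneg (by linarith : (0:ℝ) ≤ (k:ℝ) - 1) hCopt0]
    have h2 : s i0 * (L i0 - Copt) ≤ ∑ i, s i * (L i - Copt) :=
      Finset.single_le_sum (fun i _ => hterm i) (Finset.mem_univ i0)
    have h3 : ∑ i, s i * (L i - Copt) = ∑ i, s i * L i - ∑ i, s i * Copt := by
      rw [← Finset.sum_sub_distrib]
      congr 1
      ext i
      ring
    have hs0p := hspos i0
    have h4 : s i0 * ((c:ℝ) * Copt) ≤ s i0 * L i0 :=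
      mul_le_mul_of_nonneg_left hL0 hs0p.le
    nlinarith [mul_pos hs0p hCoptpos,
      mul_nonneg (mul_pos hs0p hCoptpos).le (by linarith : (0:ℝ) ≤ (c:ℝ) - 2)]
  · -- there is a first machine i₁ not in H k
    push_neg at hall
    obtain ⟨ibad, hibad⟩ := hall
    have hBadne : (Finset.univ.filter (fun i => i ∉ H k)).Nonempty :=
      ⟨ibad, by simp [hibad]⟩
    set i1 := (Finset.univ.filter (fun i => i ∉ H k)).min' hBadne with hi1def
    have hi1 : i1 ∉ H k := by
      have := Finset.min'_mem _ hBadne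
      simpa using this
    have hlt : ∀ i, i < i1 → i ∈ H k := by
      intro i hi
      by_contra hb
      have := Finset.min'_le (Finset.univ.filter (fun i => i ∉ H k)) i (by simp [hb])
      exact absurd hi (not_lt.mpr this)
    have hLge : ∀ i, i < i1 → (k : ℝ) * Copt ≤ L i :=
      fun i hi => ((hmem i).mp (hlt i hi)) i le_rfl
    have hi1L : L i1 < ((k : ℝ) - 2) * Copt := by
      have h2 : i1 ∉ H (k - 2) := fun hm' => hi1 (hcon hm')
      rw [hmem2] at h2
      push_neg at h2
      obtain ⟨i', hi'le, hi'lt⟩ := h2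
      rcases lt_or_eq_of_le hi'le with hlt' | heq
      · exfalso
        have := hLge i' hlt'
        nlinarith
      · rwa [heq] at hi'lt
    have hi0lt : i0 < i1 := by
      rcases lt_or_eq_of_le (show i0 ≤ i1 from by
        rw [hi0def]; exact Fin.mk_le_mk.mpr (Nat.zero_le _)) with h | h
      · exact h
      · exact absurd (h ▸ hi0mem) hi1
    -- the counting argument
    set F := Finset.univ.filter (fun i => i < i1) with hFdef
    set W : Fin m → ℝ := fun i => s i * (L i - ((k : ℝ) - 1) * Copt) with hWdef
    set A : Fin m → Finset (Fin n) := fun i => Finset.univ.filter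
      (fun j => σ j = i ∧ (∑ ℓ ∈ Finset.univ.filter (fun ℓ => σ ℓ = i ∧ ℓ < j), p ℓ) ≤ W i)
      with hAdef
    set T := Finset.univ.filter (fun j => τ j < i1) with hTdef
    have hi0F : i0 ∈ F := by simp [hFdef, hi0lt]
    -- Step 1: W i ≤ total processing of jobs in A i
    have hstep1 : ∀ i ∈ F, W i ≤ ∑ j ∈ A i, p j := by
      intro i hiF
      apply prefix_cover p hp0 (fun j => σ j = i) (W i)
      rw [← hwork i]
      have hWi : W i = s i * (L i - ((k : ℝ) - 1) * Copt) := rfl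
      rw [hWi]
      have := hspos i
      have hk1C : 0 ≤ ((k : ℝ) - 1) * Copt :=
        mul_nonneg (by linarith) hCopt0
      nlinarith
    -- Step 2: every job of A i goes to a machine before i1 in the optimal schedule
    have hstep2 : ∀ i ∈ F, A i ⊆ T := by
      intro i hiF j hj
      simp only [hAdef, Finset.mem_filter, Finset.mem_univ, true_and] at hj
      obtain ⟨hσj, hqj⟩ := hj
      have hiF' : i < i1 := by simpa [hFdef] using hiF
      have hne : i1 ≠ σ j := by rw [hσj]; exact ne_of_gt hiF'
      have hnl := hNL j i1 hne
      rw [hσj] at hnl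
      have hq' : (∑ ℓ ∈ Finset.univ.filter (fun ℓ => σ ℓ = i ∧ ℓ < j), p ℓ) / s i
          ≤ L i - ((k : ℝ) - 1) * Copt := by
        rw [div_le_iff₀ (hspos i), mul_comm]
        exact hqj
      have hbig : Copt < p j / s i1 := by linarith
      have hpj : s i1 * Copt < p j := by
        rw [lt_div_iff₀ (hspos i1)] at hbig
        linarith
      have hsj : s i1 < s (τ j) := by
        have h6 := hjob j
        have : s i1 * Copt < s (τ j) * Copt := lt_of_lt_of_le hpj h6
        exact lt_of_mul_lt_mul_right this hCopt0
      have hτj : τ j < i1 := by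
        by_contra hb
        push_neg at hb
        exact absurd hsj (not_lt.mpr (hsorted i1 (τ j) hb))
      simp [hTdef, hτj]
    -- Step 3: sum over F of A-sums is at most the total on T
    have hstep3 : ∑ i ∈ F, ∑ j ∈ A i, p j ≤ ∑ j ∈ T, p j := by
      have h1 : ∀ i ∈ F, ∑ j ∈ A i, p j ≤ ∑ j ∈ T.filter (fun j => σ j = i), p j := by
        intro i hiF
        apply Finset.sum_le_sum_of_subset_of_nonneg
        · intro j hj
          have hjT := hstep2 i hiF hj
          simp only [hAdef, Finset.mem_filter, Finset.mem_univ, true_and] at hj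
          simp only [Finset.mem_filter]
          exact ⟨hjT, hj.1⟩
        · exact fun j _ _ => hp0 j
      calc ∑ i ∈ F, ∑ j ∈ A i, p j
          ≤ ∑ i ∈ F, ∑ j ∈ T.filter (fun j => σ j = i), p j := Finset.sum_le_sum h1
        _ ≤ ∑ i, ∑ j ∈ T.filter (fun j => σ j = i), p j := by
            apply Finset.sum_le_sum_of_subset_of_nonneg (Finset.subset_univ F)
            exact fun i _ _ => Finset.sum_nonneg (fun j _ => hp0 j)
        _ = ∑ j ∈ T, p j := Finset.sum_fiberwise T σ p
    -- Step 4: total on T is at most optimal capacity of machines before i1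
    have hstep4 : ∑ j ∈ T, p j ≤ ∑ i ∈ F, s i * Copt := by
      have h1 : ∑ j ∈ T, p j = ∑ i ∈ F, ∑ j ∈ Finset.univ.filter (fun j => τ j = i), p j := by
        rw [Finset.sum_fiberwise_eq_sum_filter Finset.univ F τ p]
        congr 1
        ext j
        simp [hTdef, hFdef]
      rw [h1]
      exact Finset.sum_le_sum (fun i _ => hworkτ i)
    -- Step 5: sum of W over F exceeds capacity by s i0 * Copt
    have hstep5 : ∑ i ∈ F, s i * Copt + s i0 * Copt ≤ ∑ i ∈ F, W i := by
      have hterm : ∀ i ∈ F, 0 ≤ W i - s i * Copt - 0 := by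
        intro i hiF
        have hiF' : i < i1 := by simpa [hFdef] using hiF
        have := hLge i hiF'
        have := hspos i
        simp only [hWdef]
        nlinarith
      have h2 : s i0 * (L i0 - (k : ℝ) * Copt) ≤ ∑ i ∈ F, (W i - s i * Copt) := by
        have : ∀ i ∈ F, (0:ℝ) ≤ W i - s i * Copt := by
          intro i hiF
          have := hterm i hiF
          linarith
        have heq : s i0 * (L i0 - (k : ℝ) * Copt) = W i0 - s i0 * Copt := by
          simp only [hWdef]; ring
        rw [heq]
        exact Finset.single_le_sum this hi0F
      have h3 : ∑ i ∈ F, (W i - s i * Copt) = ∑ i ∈ F, W i - ∑ i ∈ F, s i * Copt := by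
        rw [← Finset.sum_sub_distrib]
      have hs0p := hspos i0
      have h4 : s i0 * Copt ≤ s i0 * (L i0 - (k : ℝ) * Copt) := by
        have h5 : Copt ≤ L i0 - (k : ℝ) * Copt := by nlinarith
        exact mul_le_mul_of_nonneg_left h5 hs0p.le
      linarith
    -- combine everything
    have hfinal : ∑ i ∈ F, W i ≤ ∑ i ∈ F, s i * Copt :=
      le_trans (Finset.sum_le_sum hstep1) (le_trans hstep3 hstep4)
    have := mul_pos (hspos i0) hCoptpos
    linarith
end

section
/- In any near list schedule, the speed of any machine in class H_k (for 5 ≤ k ≤ c with H_k nonempty) is at least twice the speed of any machine not in H_{k−4}. -/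
/-- Prefix covering: the jobs of `A` whose prefix load is at most `B` have total
processing at least `B`, provided the total processing of `A` is at least `B`. -/
lemma prefix_cover_s8 {n : ℕ} (p : Fin n → ℝ) (hp0 : ∀ j, 0 ≤ p j)
    (A : Finset (Fin n)) (B : ℝ) (hB : B ≤ ∑ j ∈ A, p j) :
    B ≤ ∑ j ∈ A.filter (fun j => (∑ ℓ ∈ A.filter (fun ℓ => ℓ < j), p ℓ) ≤ B), p j := by
  by_cases hall : ∀ j ∈ A, (∑ ℓ ∈ A.filter (fun ℓ => ℓ < j), p ℓ) ≤ B
  · rwa [Finset.filter_true_of_mem hall]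
  · push_neg at hall
    obtain ⟨j₀, hj₀A, hj₀⟩ := hall
    have hbadne : (A.filter (fun j => B < ∑ ℓ ∈ A.filter (fun ℓ => ℓ < j), p ℓ)).Nonempty :=
      ⟨j₀, Finset.mem_filter.mpr ⟨hj₀A, hj₀⟩⟩
    obtain ⟨j₁, hj₁mem, hj₁min⟩ := Finset.exists_min_image _ id hbadne
    obtain ⟨hj₁A, hj₁B⟩ := Finset.mem_filter.mp hj₁mem
    have hsub : A.filter (fun ℓ => ℓ < j₁) ⊆
        A.filter (fun j => (∑ ℓ ∈ A.filter (fun ℓ => ℓ < j), p ℓ) ≤ B) := by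
      intro ℓ hℓ
      obtain ⟨hℓA, hℓlt⟩ := Finset.mem_filter.mp hℓ
      refine Finset.mem_filter.mpr ⟨hℓA, ?_⟩
      by_contra hcon
      push_neg at hcon
      exact absurd (hj₁min ℓ (Finset.mem_filter.mpr ⟨hℓA, hcon⟩)) (by simpa using hℓlt.not_ge)
    calc B ≤ ∑ ℓ ∈ A.filter (fun ℓ => ℓ < j₁), p ℓ := hj₁B.le
      _ ≤ _ := Finset.sum_le_sum_of_subset_of_nonneg hsub (fun j _ _ => hp0 j)

/-- In any near list schedule, the speed of any machine in class H_k
(5 ≤ k ≤ c, H_k nonempty) is at least twice the speed of any machine not in H_{k−4}. -/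
theorem near_list_schedule_speed_doubling
    (m n : ℕ) (hm : 0 < m) (hn : 0 < n)
    (s : Fin m → ℝ) (hspos : ∀ i, 0 < s i)
    (hsorted : ∀ i i' : Fin m, i ≤ i' → s i' ≤ s i)
    (p : Fin n → ℝ) (hp0 : ∀ j, 0 ≤ p j)
    (σ : Fin n → Fin m)
    (L : Fin m → ℝ)
    (hL : ∀ i, L i = (∑ j ∈ Finset.univ.filter (fun j => σ j = i), p j) / s i)
    (hNL : ∀ (j : Fin n) (i' : Fin m), i' ≠ σ j →
      L (σ j) - (∑ ℓ ∈ Finset.univ.filter (fun ℓ => σ ℓ = σ j ∧ ℓ < j), p ℓ) / s (σ j)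
        ≤ L i' + p j / s i')
    (Cmax Copt : ℝ)
    (hCmax : Cmax = ⨆ i, L i)
    (hCopt : Copt = ⨅ τ : Fin n → Fin m,
      ⨆ i, (∑ j ∈ Finset.univ.filter (fun j => τ j = i), p j) / s i)
    (c : ℤ) (hc : c = ⌊Cmax / Copt⌋ - 1)
    (H : ℤ → Finset (Fin m))
    (hH : ∀ k : ℤ, H k = Finset.univ.filter (fun i => ∀ i' ≤ i, (k : ℝ) * Copt ≤ L i'))
    (k : ℤ) (hk5 : 5 ≤ k) (hkc : k ≤ c) (hne : (H k).Nonempty)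
    (i₁ i₂ : Fin m) (hi₁ : i₁ ∈ H k) (hi₂ : i₂ ∉ H (k - 4)) :
    2 * s i₂ ≤ s i₁ := by
  haveI : Nonempty (Fin m) := ⟨⟨0, hm⟩⟩
  haveI : Nonempty (Fin n) := ⟨⟨0, hn⟩⟩
  set load : (Fin n → Fin m) → Fin m → ℝ :=
    fun τ i => ∑ j ∈ Finset.univ.filter (fun j => τ j = i), p j with hload
  -- Copt is nonnegative, and in fact positive (else c = -1 < k)
  have hload0 : ∀ τ i, 0 ≤ load τ i / s i :=
    fun τ i => div_nonneg (Finset.sum_nonneg fun j _ => hp0 j) (hspos i).le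
  have hCopt0 : 0 ≤ Copt := by
    rw [hCopt]
    exact le_ciInf fun τ => Real.iSup_nonneg (hload0 τ)
  have hk6 : (6 : ℝ) ≤ (k : ℝ) + 1 := by exact_mod_cast by omega
  have hCoptpos : 0 < Copt := by
    rcases hCopt0.lt_or_eq with h | h
    · exact h
    · exfalso
      have : c = -1 := by rw [hc, ← h]; norm_num
      omega
  -- an optimal schedule
  obtain ⟨τ₀, hτ₀⟩ : ∃ τ₀ : Fin n → Fin m, ∀ τ,
      (⨆ i, load τ₀ i / s i) ≤ ⨆ i, load τ i / s i :=
    Finite.exists_min _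
  have hopt : ∀ i, load τ₀ i ≤ Copt * s i := by
    intro i
    have h1 : load τ₀ i / s i ≤ ⨆ i, load τ₀ i / s i :=
      le_ciSup (f := fun i => load τ₀ i / s i)
        (Set.Finite.bddAbove (Set.finite_range _)) i
    have h2 : (⨆ i, load τ₀ i / s i) ≤ Copt := by
      rw [hCopt]; exact le_ciInf hτ₀
    exact (div_le_iff₀ (hspos i)).mp (h1.trans h2)
  -- membership facts for H
  have hHmem : ∀ (k' : ℤ) (i : Fin m), i ∈ H k' ↔ ∀ i' ≤ i, (k' : ℝ) * Copt ≤ L i' := by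
    intro k' i; rw [hH k']; simp
  have hi₁' : ∀ i' ≤ i₁, (k : ℝ) * Copt ≤ L i' := (hHmem k i₁).mp hi₁
  obtain ⟨i', hi'le, hi'L⟩ : ∃ i' ≤ i₂, L i' < ((k : ℝ) - 4) * Copt := by
    have h := (hHmem (k - 4) i₂).not.mp hi₂
    push_neg at h
    obtain ⟨i', h1, h2⟩ := h
    exact ⟨i', h1, by push_cast at h2; linarith⟩
  -- prefix loads
  set Q : Fin n → ℝ := fun j => ∑ ℓ ∈ Finset.univ.filter (fun ℓ => σ ℓ = σ j ∧ ℓ < j), p ℓ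
    with hQdef
  set Sgood : Finset (Fin n) := Finset.univ.filter
    (fun j => σ j ∈ H k ∧ Q j ≤ (L (σ j) - ((k : ℝ) - 2) * Copt) * s (σ j)) with hSgood
  -- per-machine lower bound on good jobs
  have hper : ∀ i ∈ H k, 2 * Copt * s i ≤ ∑ j ∈ Sgood.filter (fun j => σ j = i), p j := by
    intro i hiH
    have hLi : (k : ℝ) * Copt ≤ L i := (hHmem k i).mp hiH i le_rfl
    set A : Finset (Fin n) := Finset.univ.filter (fun j => σ j = i) with hA
    set B : ℝ := (L i - ((k : ℝ) - 2) * Copt) * s i with hB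
    have htot : ∑ j ∈ A, p j = L i * s i := by
      rw [hL i, div_mul_cancel₀ _ (hspos i).ne']
    have hBtot : B ≤ ∑ j ∈ A, p j := by
      rw [htot, hB]
      have hx : 0 ≤ (((k : ℝ) - 2) * Copt) * s i :=
        mul_nonneg (mul_nonneg (by linarith) hCoptpos.le) (hspos i).le
      nlinarith [hx]
    have hcov := prefix_cover_s8 p hp0 A B hBtot
    have hsub : A.filter (fun j => (∑ ℓ ∈ A.filter (fun ℓ => ℓ < j), p ℓ) ≤ B) ⊆
        Sgood.filter (fun j => σ j = i) := by
      intro j hj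
      obtain ⟨hjA, hjle⟩ := Finset.mem_filter.mp hj
      have hσj : σ j = i := (Finset.mem_filter.mp hjA).2
      have hQeq : Q j = ∑ ℓ ∈ A.filter (fun ℓ => ℓ < j), p ℓ := by
        rw [hQdef, hA, Finset.filter_filter]
        apply Finset.sum_congr _ (fun _ _ => rfl)
        apply Finset.filter_congr
        intro ℓ _
        rw [hσj]
      refine Finset.mem_filter.mpr ⟨Finset.mem_filter.mpr ⟨Finset.mem_univ _, ?_, ?_⟩, hσj⟩
      · rw [hσj]; exact hiH
      · rw [hσj, hQeq]; exact hjle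
    have h1 : B ≤ ∑ j ∈ Sgood.filter (fun j => σ j = i), p j :=
      hcov.trans (Finset.sum_le_sum_of_subset_of_nonneg hsub (fun j _ _ => hp0 j))
    have h2 : 2 * Copt * s i ≤ B := by
      rw [hB]
      have := mul_le_mul_of_nonneg_right
        (show 2 * Copt ≤ L i - ((k : ℝ) - 2) * Copt by linarith) (hspos i).le
      nlinarith [this]
    linarith
  -- total good processing exceeds the optimal capacity of H k
  have htotal : 2 * Copt * ∑ i ∈ H k, s i ≤ ∑ j ∈ Sgood, p j := by
    have hmap : ∀ j ∈ Sgood, σ j ∈ H k := by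
      intro j hj
      exact ((Finset.mem_filter.mp hj).2).1
    rw [← Finset.sum_fiberwise_of_maps_to hmap p, Finset.mul_sum]
    exact Finset.sum_le_sum hper
  -- some good job is scheduled outside H k by τ₀
  obtain ⟨j, hjS, hjτ⟩ : ∃ j ∈ Sgood, τ₀ j ∉ H k := by
    by_contra hcon
    push_neg at hcon
    have h1 : ∑ j ∈ Sgood, p j ≤ ∑ j ∈ Finset.univ.filter (fun j => τ₀ j ∈ H k), p j := by
      apply Finset.sum_le_sum_of_subset_of_nonneg _ (fun j _ _ => hp0 j)
      intro j hj
      exact Finset.mem_filter.mpr ⟨Finset.mem_univ _, hcon j hj⟩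
    have h2 : ∑ j ∈ Finset.univ.filter (fun j => τ₀ j ∈ H k), p j
        = ∑ i ∈ H k, load τ₀ i := by
      rw [← Finset.sum_fiberwise_of_maps_to
        (fun j hj => (Finset.mem_filter.mp hj).2) p]
      apply Finset.sum_congr rfl
      intro i hiH
      apply Finset.sum_congr _ (fun _ _ => rfl)
      rw [Finset.filter_filter]
      apply Finset.filter_congr
      intro j _
      constructor
      · exact fun h => h.2
      · exact fun h => ⟨by rw [h]; exact hiH, h⟩
    have h3 : ∑ i ∈ H k, load τ₀ i ≤ Copt * ∑ i ∈ H k, s i := by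
      rw [Finset.mul_sum]
      exact Finset.sum_le_sum (fun i _ => hopt i)
    have hspossum : 0 < ∑ i ∈ H k, s i :=
      Finset.sum_pos (fun i _ => hspos i) hne
    nlinarith
  -- unpack the good job
  obtain ⟨hσjH, hQj⟩ := (Finset.mem_filter.mp hjS).2
  have hLσj : (k : ℝ) * Copt ≤ L (σ j) := (hHmem k (σ j)).mp hσjH (σ j) le_rfl
  -- apply the near-list inequality at j against i'
  have hi'ne : i' ≠ σ j := by
    intro h
    rw [h] at hi'L
    nlinarith
  have hNLj := hNL j i' hi'ne
  have hQdiv : Q j / s (σ j) ≤ L (σ j) - ((k : ℝ) - 2) * Copt :=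
    (div_le_iff₀ (hspos _)).mpr hQj
  have hQdiv' : (∑ ℓ ∈ Finset.univ.filter (fun ℓ => σ ℓ = σ j ∧ ℓ < j), p ℓ) / s (σ j)
      ≤ L (σ j) - ((k : ℝ) - 2) * Copt := hQdiv
  have h3 : 2 * Copt < p j / s i' := by
    nlinarith [hNLj, hQdiv', hi'L]
  have h4 : 2 * Copt * s i' < p j := (lt_div_iff₀ (hspos i')).mp h3
  have h5 : s i₂ ≤ s i' := hsorted i' i₂ hi'le
  -- p j is small since τ₀ schedules it outside H k
  have hlt : i₁ < τ₀ j := by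
    by_contra hle
    push_neg at hle
    exact hjτ ((hHmem k (τ₀ j)).mpr (fun i'' h'' => hi₁' i'' (h''.trans hle)))
  have h6 : s (τ₀ j) ≤ s i₁ := hsorted i₁ (τ₀ j) hlt.le
  have h7 : p j ≤ load τ₀ (τ₀ j) := by
    apply Finset.single_le_sum (fun ℓ _ => hp0 ℓ)
    simp
  have h8 : p j ≤ Copt * s i₁ :=
    h7.trans ((hopt (τ₀ j)).trans (mul_le_mul_of_nonneg_left h6 hCopt0))
  -- combine
  have h9 : Copt * (2 * s i₂) < Copt * s i₁ := by nlinarith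
  have := (mul_lt_mul_iff_right₀ hCoptpos).mp h9
  linarith
end

section
/- In any near list schedule with all processing requirements pⱼ ≤ 1, every job assigned by an optimal schedule to a machine outside H₂ has processing requirement at most 2^{−c/6+2}, where c = ⌊C_max(σ)/C*_max⌋ − 1. -/
set_option maxHeartbeats 1600000 in
/-- In any near list schedule with all pⱼ ≤ 1, every job assigned
by an optimal schedule to a machine outside H₂ has pⱼ ≤ 2^{−c/6+2}. -/
theorem near_list_schedule_small_jobs
    (m n : ℕ) (hm : 0 < m) (hn : 0 < n)
    (s : Fin m → ℝ) (hspos : ∀ i, 0 < s i)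
    (hsorted : ∀ i i' : Fin m, i ≤ i' → s i' ≤ s i)
    (p : Fin n → ℝ) (hp0 : ∀ j, 0 ≤ p j)
    (σ : Fin n → Fin m)
    (L : Fin m → ℝ)
    (hL : ∀ i, L i = (∑ j ∈ Finset.univ.filter (fun j => σ j = i), p j) / s i)
    (hNL : ∀ (j : Fin n) (i' : Fin m), i' ≠ σ j →
      L (σ j) - (∑ ℓ ∈ Finset.univ.filter (fun ℓ => σ ℓ = σ j ∧ ℓ < j), p ℓ) / s (σ j)
        ≤ L i' + p j / s i')
    (Cmax Copt : ℝ)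
    (hCmax : Cmax = ⨆ i, L i)
    (hCopt : Copt = ⨅ τ : Fin n → Fin m,
      ⨆ i, (∑ j ∈ Finset.univ.filter (fun j => τ j = i), p j) / s i)
    (c : ℤ) (hc : c = ⌊Cmax / Copt⌋ - 1)
    (H : ℤ → Finset (Fin m))
    (hH : ∀ k : ℤ, H k = Finset.univ.filter (fun i => ∀ i' ≤ i, (k : ℝ) * Copt ≤ L i'))
    (hp1 : ∀ j, p j ≤ 1)
    (τ : Fin n → Fin m)
    (hτ : (⨆ i, (∑ j ∈ Finset.univ.filter (fun j => τ j = i), p j) / s i) = Copt)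
    (j : Fin n) (hj : τ j ∉ H 2) :
    p j ≤ (2 : ℝ) ^ (-(c : ℝ) / 6 + 2) := by
  -- Easy case: c ≤ 12
  by_cases hc13 : c < 13
  · have he : (0:ℝ) ≤ -(c:ℝ)/6 + 2 := by
      have h12 : (c:ℝ) ≤ 12 := by exact_mod_cast (by omega : c ≤ 12)
      linarith
    calc p j ≤ 1 := hp1 j
      _ = (2:ℝ) ^ (0:ℝ) := (Real.rpow_zero 2).symm
      _ ≤ _ := Real.rpow_le_rpow_of_exponent_le one_le_two he
  push_neg at hc13
  -- Easy case: p j ≤ 0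
  by_cases hpj : p j ≤ 0
  · exact le_trans hpj (Real.rpow_pos_of_pos two_pos _).le
  push_neg at hpj
  -- Optimal schedule bounds
  have hbddτ : BddAbove (Set.range fun i =>
      (∑ j' ∈ Finset.univ.filter (fun j' => τ j' = i), p j') / s i) :=
    Set.Finite.bddAbove (Set.finite_range _)
  have hoptmach : ∀ i, (∑ j' ∈ Finset.univ.filter (fun j' => τ j' = i), p j') / s i ≤ Copt := by
    intro i; rw [← hτ]; exact le_ciSup hbddτ i
  have hpb : ∀ j', p j' ≤ s (τ j') * Copt := by
    intro j'
    have h1 : p j' ≤ ∑ ℓ ∈ Finset.univ.filter (fun ℓ => τ ℓ = τ j'), p ℓ :=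
      Finset.single_le_sum (fun ℓ _ => hp0 ℓ) (by simp)
    have h2 := hoptmach (τ j')
    rw [div_le_iff₀ (hspos _)] at h2
    calc p j' ≤ _ := h1
      _ ≤ Copt * s (τ j') := h2
      _ = s (τ j') * Copt := mul_comm _ _
  have hCoptpos : 0 < Copt := by
    by_contra h
    push_neg at h
    have := hpb j
    nlinarith [hspos (τ j)]
  -- Cmax is attained
  have hbdd : BddAbove (Set.range L) := Set.Finite.bddAbove (Set.finite_range L)
  have hFinNe : Nonempty (Fin m) := ⟨⟨0, hm⟩⟩
  obtain ⟨istar, histar⟩ := Finite.exists_max L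
  have hCmaxeq : Cmax = L istar := by
    rw [hCmax]; exact le_antisymm (ciSup_le histar) (le_ciSup hbdd istar)
  have hCmaxge : ((c:ℝ)+1) * Copt ≤ Cmax := by
    have h1 : ((⌊Cmax / Copt⌋ : ℤ) : ℝ) ≤ Cmax / Copt := Int.floor_le _
    have h2 : ((c:ℝ)+1) ≤ Cmax / Copt := by
      have : ((c+1 : ℤ) : ℝ) = (⌊Cmax / Copt⌋ : ℝ) := by rw [hc]; push_cast; ring
      push_cast at this
      linarith
    rw [le_div_iff₀ hCoptpos] at h2
    linarith
  -- first job on a machine with positive load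
  have hfirst : ∀ i : Fin m, 0 < L i → ∃ j0 : Fin n, σ j0 = i ∧
      (∑ ℓ ∈ Finset.univ.filter (fun ℓ => σ ℓ = i ∧ ℓ < j0), p ℓ) = 0 := by
    intro i hi
    have hEq : (∑ j' ∈ Finset.univ.filter (fun j' => σ j' = i), p j') = L i * s i := by
      rw [hL i, div_mul_cancel₀ _ (hspos i).ne']
    have hsum : 0 < ∑ j' ∈ Finset.univ.filter (fun j' => σ j' = i), p j' := by
      rw [hEq]; exact mul_pos hi (hspos i)
    have hne : (Finset.univ.filter (fun j' => σ j' = i)).Nonempty := by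
      by_contra h
      rw [Finset.not_nonempty_iff_eq_empty] at h
      rw [h, Finset.sum_empty] at hsum
      exact lt_irrefl _ hsum
    have hmm := Finset.min'_mem (Finset.univ.filter (fun j' => σ j' = i)) hne
    rw [Finset.mem_filter] at hmm
    refine ⟨(Finset.univ.filter (fun j' => σ j' = i)).min' hne, hmm.2, ?_⟩
    have hempty : Finset.univ.filter (fun ℓ => σ ℓ = i ∧
        ℓ < (Finset.univ.filter (fun j' => σ j' = i)).min' hne) = ∅ := by
      ext ℓ
      simp only [Finset.mem_filter, Finset.mem_univ, true_and, Finset.notMem_empty, iff_false,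
        not_and]
      intro h1 h2
      exact absurd (Finset.min'_le _ ℓ (by simp [h1])) (not_le.mpr h2)
    rw [hempty, Finset.sum_empty]
  -- job j0: first job on the makespan machine
  have hLis : ((c:ℝ)+1) * Copt ≤ L istar := hCmaxeq ▸ hCmaxge
  have hc1pos : (0:ℝ) < ((c:ℝ)+1) * Copt := by
    have : (13:ℝ) ≤ (c:ℝ) := by exact_mod_cast hc13
    nlinarith
  obtain ⟨j0, hj0σ, hj0pre⟩ := hfirst istar (lt_of_lt_of_le hc1pos hLis)
  have hNL0 : ∀ i' : Fin m, i' ≠ istar → L istar ≤ L i' + p j0 / s i' := by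
    intro i' h
    have h1 := hNL j0 i' (by rw [hj0σ]; exact h)
    rw [hj0σ, hj0pre] at h1
    simpa using h1
  -- machine 0 is highly loaded
  set M0 : Fin m := ⟨0, hm⟩ with hM0
  have hM0le : ∀ i : Fin m, M0 ≤ i := by intro i; simp [hM0, Fin.le_def]
  have hL0 : (c:ℝ) * Copt ≤ L M0 := by
    by_cases h : M0 = istar
    · rw [h]; linarith
    · have h1 := hNL0 M0 h
      have h2 : p j0 / s M0 ≤ Copt := by
        rw [div_le_iff₀ (hspos M0)]
        have h3 : s (τ j0) ≤ s M0 := hsorted M0 (τ j0) (hM0le _)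
        calc p j0 ≤ s (τ j0) * Copt := hpb j0
          _ ≤ s M0 * Copt := mul_le_mul_of_nonneg_right h3 hCoptpos.le
          _ = Copt * s M0 := mul_comm _ _
      linarith
  -- witness of a lightly loaded machine before τ j
  obtain ⟨iw, hiwle, hiw⟩ : ∃ i' : Fin m, i' ≤ τ j ∧ L i' < 2 * Copt := by
    rw [hH 2] at hj
    simp only [Finset.mem_filter, Finset.mem_univ, true_and, not_forall] at hj
    push_neg at hj
    obtain ⟨i', hle, hlt⟩ := hj
    exact ⟨i', hle, by push_cast at hlt; linarith⟩
  have hBadne : ∀ k : ℤ, 2 ≤ k →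
      (Finset.univ.filter (fun i => L i < (k:ℝ) * Copt)).Nonempty := by
    intro k hk
    refine ⟨iw, Finset.mem_filter.mpr ⟨Finset.mem_univ _, ?_⟩⟩
    have h2k : (2:ℝ) ≤ (k:ℝ) := by exact_mod_cast hk
    nlinarith
  -- b k : the first machine with load below k * Copt
  set b : ℤ → Fin m := fun k =>
    if h : (Finset.univ.filter (fun i => L i < (k:ℝ) * Copt)).Nonempty
    then (Finset.univ.filter (fun i => L i < (k:ℝ) * Copt)).min' h else M0 with hbdef
  have hbspec : ∀ (k : ℤ) (h : (Finset.univ.filter (fun i => L i < (k:ℝ) * Copt)).Nonempty),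
      b k = (Finset.univ.filter (fun i => L i < (k:ℝ) * Copt)).min' h := by
    intro k h; rw [hbdef]; simp [dif_pos h]
  have hbbad : ∀ k : ℤ, 2 ≤ k → L (b k) < (k:ℝ) * Copt := by
    intro k hk
    rw [hbspec k (hBadne k hk)]
    have hmm := Finset.min'_mem (Finset.univ.filter (fun i => L i < (k:ℝ) * Copt)) (hBadne k hk)
    rw [Finset.mem_filter] at hmm
    exact hmm.2
  have hble : ∀ (k : ℤ) (i : Fin m), L i < (k:ℝ) * Copt → b k ≤ i := by
    intro k i hi
    have hne : (Finset.univ.filter (fun i' => L i' < (k:ℝ) * Copt)).Nonempty :=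
      ⟨i, Finset.mem_filter.mpr ⟨Finset.mem_univ _, hi⟩⟩
    rw [hbspec k hne]
    exact Finset.min'_le (Finset.univ.filter (fun i' => L i' < (k:ℝ) * Copt)) i
      (Finset.mem_filter.mpr ⟨Finset.mem_univ _, hi⟩)
  have hbgood : ∀ (k : ℤ) (i : Fin m), i < b k → (k:ℝ) * Copt ≤ L i := by
    intro k i hi
    by_contra h
    push_neg at h
    exact absurd (hble k i h) (not_le.mpr hi)
  have hbmono : ∀ k k' : ℤ, 2 ≤ k → k ≤ k' → b k' ≤ b k := by
    intro k k' hk hkk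
    apply hble
    have hcle : (k:ℝ) ≤ (k':ℝ) := by exact_mod_cast hkk
    calc L (b k) < (k:ℝ) * Copt := hbbad k hk
      _ ≤ (k':ℝ) * Copt := by nlinarith
  -- remaining load function
  set R : Fin n → ℝ := fun j' => L (σ j') -
    (∑ ℓ ∈ Finset.univ.filter (fun ℓ => σ ℓ = σ j' ∧ ℓ < j'), p ℓ) / s (σ j') with hRdef
  have hRval : ∀ j' : Fin n, R j' = L (σ j') -
      (∑ ℓ ∈ Finset.univ.filter (fun ℓ => σ ℓ = σ j' ∧ ℓ < j'), p ℓ) / s (σ j') :=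
    fun j' => rfl
  -- work of high-remaining-load jobs on a machine
  have hwork : ∀ (i : Fin m) (θ : ℝ), 0 ≤ θ →
      (L i - θ) * s i ≤
        ∑ j' ∈ (Finset.univ.filter (fun j' => θ ≤ R j')).filter (fun j' => σ j' = i), p j' := by
    intro i θ hθ
    by_cases hDne : (Finset.univ.filter (fun j' => σ j' = i ∧ R j' < θ)).Nonempty
    · set j' := (Finset.univ.filter (fun j' => σ j' = i ∧ R j' < θ)).min' hDne with hj'
      have hj'mem := Finset.min'_mem _ hDne
      rw [Finset.mem_filter] at hj'mem
      obtain ⟨-, hj'σ, hj'R⟩ := hj'mem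
      have hsub : Finset.univ.filter (fun ℓ => σ ℓ = i ∧ ℓ < j') ⊆
          (Finset.univ.filter (fun j'' => θ ≤ R j'')).filter (fun j'' => σ j'' = i) := by
        intro ℓ hℓ
        rw [Finset.mem_filter] at hℓ
        obtain ⟨-, hσℓ, hℓlt⟩ := hℓ
        simp only [Finset.mem_filter, Finset.mem_univ, true_and]
        refine ⟨?_, hσℓ⟩
        by_contra hc'
        push_neg at hc'
        have hmem : ℓ ∈ Finset.univ.filter (fun j'' => σ j'' = i ∧ R j'' < θ) := by
          simp [hσℓ, hc']
        exact absurd (Finset.min'_le _ ℓ hmem) (not_le.mpr hℓlt)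
      have hRj' : L i - (∑ ℓ ∈ Finset.univ.filter (fun ℓ => σ ℓ = i ∧ ℓ < j'), p ℓ) / s i < θ := by
        have h0 := hj'R
        rw [hRval j', hj'σ] at h0
        exact h0
      have h1 : (L i - θ) * s i ≤ ∑ ℓ ∈ Finset.univ.filter (fun ℓ => σ ℓ = i ∧ ℓ < j'), p ℓ := by
        have h2 : L i - θ < (∑ ℓ ∈ Finset.univ.filter (fun ℓ => σ ℓ = i ∧ ℓ < j'), p ℓ) / s i := by
          linarith
        have := (lt_div_iff₀ (hspos i)).mp h2
        linarith
      exact h1.trans (Finset.sum_le_sum_of_subset_of_nonneg hsub (fun ℓ _ _ => hp0 ℓ))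
    · have hall : Finset.univ.filter (fun j'' => σ j'' = i) ⊆
          (Finset.univ.filter (fun j'' => θ ≤ R j'')).filter (fun j'' => σ j'' = i) := by
        intro ℓ hℓ
        rw [Finset.mem_filter] at hℓ
        simp only [Finset.mem_filter, Finset.mem_univ, true_and]
        refine ⟨?_, hℓ.2⟩
        by_contra hc'
        push_neg at hc'
        exact hDne ⟨ℓ, by simp [hℓ.2, hc']⟩
      have h3 : (∑ j'' ∈ Finset.univ.filter (fun j'' => σ j'' = i), p j'') = L i * s i := by
        rw [hL i, div_mul_cancel₀ _ (hspos i).ne']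
      calc (L i - θ) * s i ≤ L i * s i := by nlinarith [hspos i]
        _ = ∑ j'' ∈ Finset.univ.filter (fun j'' => σ j'' = i), p j'' := h3.symm
        _ ≤ _ := Finset.sum_le_sum_of_subset_of_nonneg hall (fun ℓ _ _ => hp0 ℓ)
  -- key: jobs with large remaining load are big
  have hkey : ∀ (k : ℤ), 2 ≤ k → ∀ (j' : Fin n), σ j' ≠ b k →
      ((k:ℝ)+2) * Copt ≤ R j' → 2 * s (b k) * Copt < p j' := by
    intro k hk j' hne hR
    have h1 := hNL j' (b k) (Ne.symm hne)
    have h2 : R j' ≤ L (b k) + p j' / s (b k) := by rw [hRval j']; exact h1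
    have h3 := hbbad k hk
    have hexp : ((k:ℝ)+2) * Copt = (k:ℝ) * Copt + 2 * Copt := by ring
    have h5 : (k:ℝ) * Copt + 2 * Copt ≤ L (b k) + p j' / s (b k) := by
      rw [← hexp]; exact hR.trans h2
    have h4 : 2 * Copt < p j' / s (b k) := by linarith
    rw [lt_div_iff₀ (hspos _)] at h4
    linarith
  -- speed doubling
  have hdouble : ∀ k : ℤ, 2 ≤ k → k + 6 ≤ c → 2 * s (b k) ≤ s (b (k+6)) := by
    intro k hk2 hk6
    by_contra hcon
    push_neg at hcon
    have hmono := hbmono k (k+6) hk2 (by omega)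
    have hQne : (Finset.univ.filter (fun i : Fin m => s i ≤ 2 * s (b k))).Nonempty :=
      ⟨b (k+6), by simp only [Finset.mem_filter, Finset.mem_univ, true_and]; linarith⟩
    set q := (Finset.univ.filter (fun i : Fin m => s i ≤ 2 * s (b k))).min' hQne with hq
    have hq1 : q ≤ b (k+6) := Finset.min'_le _ _
      (by simp only [Finset.mem_filter, Finset.mem_univ, true_and]; linarith)
    have hq2 : q ≤ b k := hq1.trans hmono
    have hslow : ∀ i : Fin m, q ≤ i → s i ≤ 2 * s (b k) := by
      intro i hi
      have hqm' := Finset.min'_mem (Finset.univ.filter (fun i : Fin m => s i ≤ 2 * s (b k))) hQne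
      rw [← hq, Finset.mem_filter] at hqm'
      have hqm : s q ≤ 2 * s (b k) := hqm'.2
      exact (hsorted q i hi).trans hqm
    have hgood : ∀ i : Fin m, i < q → ((k:ℝ)+6) * Copt ≤ L i := by
      intro i hi
      have := hbgood (k+6) i (lt_of_lt_of_le hi hq1)
      push_cast at this
      linarith
    have hτq : ∀ j' : Fin n, σ j' ≠ b k → ((k:ℝ)+2) * Copt ≤ R j' → τ j' < q := by
      intro j' hne hR
      have h1 := hkey k hk2 j' hne hR
      have h2 := hpb j'
      have h3 : 2 * s (b k) < s (τ j') := by nlinarith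
      by_contra h
      push_neg at h
      exact absurd h3 (not_lt.mpr (hslow _ h))
    have hk2C : (0:ℝ) ≤ ((k:ℝ)+2) * Copt := by
      have : (2:ℝ) ≤ (k:ℝ) := by exact_mod_cast hk2
      nlinarith
    have hM0q : M0 < q := by
      by_contra h
      push_neg at h
      have hkc : ((k:ℝ)+6) ≤ (c:ℝ) := by exact_mod_cast hk6
      have hL0' : ((k:ℝ)+6) * Copt ≤ L M0 := by nlinarith
      have hL0pos : 0 < L M0 := by
        have : (2:ℝ) ≤ (k:ℝ) := by exact_mod_cast hk2
        nlinarith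
      obtain ⟨j0', hσ0, hpre0⟩ := hfirst M0 hL0pos
      have hne0 : σ j0' ≠ b k := by
        rw [hσ0]
        intro hEq
        have hb1 := hbbad k hk2
        rw [← hEq] at hb1
        nlinarith
      have hR0 : ((k:ℝ)+2) * Copt ≤ R j0' := by
        rw [hRval j0', hσ0, hpre0]
        simp only [zero_div, sub_zero]
        nlinarith
      have h5 := hτq j0' hne0 hR0
      have h6 : τ j0' < M0 := lt_of_lt_of_le h5 h
      exact absurd h6 (by simp [hM0, Fin.lt_def])
    -- summation contradiction
    have hstep1 : ∀ i ∈ Finset.univ.filter (fun i : Fin m => i < q),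
        4 * Copt * s i ≤
          ∑ j' ∈ (Finset.univ.filter (fun j' => ((k:ℝ)+2) * Copt ≤ R j')).filter
            (fun j' => σ j' = i), p j' := by
      intro i hi
      rw [Finset.mem_filter] at hi
      have h1 := hwork i (((k:ℝ)+2) * Copt) hk2C
      have h2 := hgood i hi.2
      have h3 : 4 * Copt * s i ≤ (L i - ((k:ℝ)+2) * Copt) * s i := by nlinarith [hspos i]
      linarith
    have hfib1 : ∑ i ∈ Finset.univ.filter (fun i : Fin m => i < q),
        ∑ j' ∈ (Finset.univ.filter (fun j' => ((k:ℝ)+2) * Copt ≤ R j')).filter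
          (fun j' => σ j' = i), p j'
        = ∑ j' ∈ (Finset.univ.filter (fun j' => ((k:ℝ)+2) * Copt ≤ R j')).filter
            (fun j' => σ j' ∈ Finset.univ.filter (fun i : Fin m => i < q)), p j' :=
      Finset.sum_fiberwise_eq_sum_filter _ _ _ _
    have hsub2 : (Finset.univ.filter (fun j' => ((k:ℝ)+2) * Copt ≤ R j')).filter
          (fun j' => σ j' ∈ Finset.univ.filter (fun i : Fin m => i < q)) ⊆
        Finset.univ.filter (fun j' => τ j' ∈ Finset.univ.filter (fun i : Fin m => i < q)) := by
      intro j' hj'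
      simp only [Finset.mem_filter, Finset.mem_univ, true_and] at hj' ⊢
      obtain ⟨hR', hσ'⟩ := hj'
      have hne : σ j' ≠ b k := ne_of_lt (lt_of_lt_of_le hσ' hq2)
      exact hτq j' hne hR'
    have hfib2 : ∑ j' ∈ Finset.univ.filter
          (fun j' => τ j' ∈ Finset.univ.filter (fun i : Fin m => i < q)), p j'
        = ∑ i ∈ Finset.univ.filter (fun i : Fin m => i < q),
            ∑ j' ∈ Finset.univ.filter (fun j' => τ j' = i), p j' :=
      (Finset.sum_fiberwise_eq_sum_filter _ _ _ _).symm
    have hsum3 : ∑ i ∈ Finset.univ.filter (fun i : Fin m => i < q),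
        ∑ j' ∈ Finset.univ.filter (fun j' => τ j' = i), p j'
        ≤ ∑ i ∈ Finset.univ.filter (fun i : Fin m => i < q), Copt * s i := by
      apply Finset.sum_le_sum
      intro i _
      have := hoptmach i
      rw [div_le_iff₀ (hspos i)] at this
      linarith
    have hfinal : ∑ i ∈ Finset.univ.filter (fun i : Fin m => i < q), 4 * Copt * s i ≤
        ∑ i ∈ Finset.univ.filter (fun i : Fin m => i < q), Copt * s i := by
      calc ∑ i ∈ Finset.univ.filter (fun i : Fin m => i < q), 4 * Copt * s i
          ≤ _ := Finset.sum_le_sum hstep1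
        _ = _ := hfib1
        _ ≤ _ := Finset.sum_le_sum_of_subset_of_nonneg hsub2 (fun ℓ _ _ => hp0 ℓ)
        _ = _ := hfib2
        _ ≤ _ := hsum3
    have hpos : 0 < ∑ i ∈ Finset.univ.filter (fun i : Fin m => i < q), s i :=
      Finset.sum_pos (fun i _ => hspos i)
        ⟨M0, by simp only [Finset.mem_filter, Finset.mem_univ, true_and]; exact hM0q⟩
    rw [show (fun i : Fin m => 4 * Copt * s i) = (fun i : Fin m => (4 * Copt) * s i) from rfl,
      ← Finset.mul_sum, ← Finset.mul_sum] at hfinal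
    nlinarith
  -- iterate the doubling
  have hiter : ∀ t : ℕ, 2 + 6 * (t:ℤ) ≤ c → s (b 2) * 2 ^ t ≤ s (b (2 + 6 * t)) := by
    intro t
    induction t with
    | zero => intro _; simp
    | succ t ih =>
      intro hle
      have hle' : (2:ℤ) + 6 * ((t:ℤ)+1) ≤ c := by push_cast at hle; push_cast; omega
      have h1 : 2 + 6 * (t:ℤ) ≤ c := by omega
      have h2 := ih h1
      have h3 := hdouble (2 + 6 * t) (by omega) (by omega)
      have hidx : (2 + 6 * (t:ℤ)) + 6 = 2 + 6 * ((t:ℕ)+1 : ℤ) := by ring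
      have h4 : s (b (2 + 6 * ((t:ℕ)+1 : ℤ))) = s (b ((2 + 6 * (t:ℤ)) + 6)) := by rw [hidx]
      calc s (b 2) * 2 ^ (t+1) = (s (b 2) * 2 ^ t) * 2 := by ring
        _ ≤ s (b (2 + 6 * t)) * 2 := by nlinarith
        _ ≤ s (b ((2 + 6 * (t:ℤ)) + 6)) := by linarith
        _ = s (b (2 + 6 * ((t:ℕ)+1 : ℤ))) := h4.symm
        _ = s (b (2 + 6 * (((t:ℕ)+1 : ℕ) : ℤ))) := by norm_cast
  -- choose the number of steps
  set T : ℕ := (c - 3).toNat / 6 with hT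
  have hc3 : ((c-3).toNat : ℤ) = c - 3 := Int.toNat_of_nonneg (by omega)
  have h6T : 6 * (T:ℤ) ≤ c - 3 := by
    have h1 : T * 6 ≤ (c-3).toNat := Nat.div_mul_le_self _ _
    have h2 : ((T * 6 : ℕ) : ℤ) ≤ ((c-3).toNat : ℤ) := by exact_mod_cast h1
    rw [hc3] at h2
    push_cast at h2
    omega
  have h6T' : c - 8 ≤ 6 * (T:ℤ) := by
    have h1 : 6 * ((c-3).toNat / 6) + (c-3).toNat % 6 = (c-3).toNat := Nat.div_add_mod _ _
    have h2 : (c-3).toNat % 6 < 6 := Nat.mod_lt _ (by norm_num)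
    have h3 : ((6 * T + (c-3).toNat % 6 : ℕ) : ℤ) = ((c-3).toNat : ℤ) := by
      rw [hT]; exact_mod_cast h1
    rw [hc3] at h3
    push_cast at h3
    omega
  -- assemble the chain
  have hA : s (b 2) * 2 ^ T ≤ s (b (2 + 6 * T)) := hiter T (by omega)
  have hB : s (b (2 + 6 * T)) ≤ s (b (c - 1)) := by
    have h1 : b (c-1) ≤ b (2 + 6 * T) := hbmono (2 + 6 * T) (c-1) (by omega) (by omega)
    exact hsorted _ _ h1
  have hC : s (b (c-1)) * Copt ≤ 1/2 := by
    have hk : (2:ℤ) ≤ c - 1 := by omega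
    have hbad := hbbad (c-1) hk
    have hcast : ((c-1 : ℤ) : ℝ) = (c:ℝ) - 1 := by push_cast; ring
    rw [hcast] at hbad
    have hne : b (c-1) ≠ istar := by
      intro hEq
      rw [hEq] at hbad
      nlinarith
    have h1 := hNL0 (b (c-1)) hne
    have h2 : 2 * Copt < p j0 / s (b (c-1)) := by linarith
    rw [lt_div_iff₀ (hspos _)] at h2
    have h3 := hp1 j0
    nlinarith [hspos (b (c-1))]
  have hD : p j ≤ s (b 2) * Copt := by
    have h0 : b 2 ≤ iw := hble 2 iw (by push_cast; linarith)
    have h1 : b 2 ≤ τ j := h0.trans hiwle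
    have h2 : s (τ j) ≤ s (b 2) := hsorted _ _ h1
    calc p j ≤ s (τ j) * Copt := hpb j
      _ ≤ s (b 2) * Copt := mul_le_mul_of_nonneg_right h2 hCoptpos.le
  have h2Tpos : (0:ℝ) < 2 ^ T := by positivity
  have hE : p j * 2 ^ T ≤ 1/2 := by
    calc p j * 2 ^ T ≤ (s (b 2) * Copt) * 2 ^ T :=
          mul_le_mul_of_nonneg_right hD h2Tpos.le
      _ = (s (b 2) * 2 ^ T) * Copt := by ring
      _ ≤ s (b (c-1)) * Copt :=
          mul_le_mul_of_nonneg_right (hA.trans hB) hCoptpos.le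
      _ ≤ 1/2 := hC
  -- numeric finish
  have hval : (2:ℝ) ^ (-(1:ℝ) - (T:ℝ)) = (1/2) * ((2:ℝ) ^ (T:ℕ))⁻¹ := by
    rw [show (-(1:ℝ) - (T:ℝ)) = -((1:ℝ) + (T:ℝ)) by ring,
      Real.rpow_neg (by norm_num : (0:ℝ) ≤ 2),
      Real.rpow_add (by norm_num : (0:ℝ) < 2), Real.rpow_one,
      Real.rpow_natCast, mul_inv]
    ring
  have hpow : (2:ℝ) ^ (-(1:ℝ) - (T:ℝ)) ≤ (2:ℝ) ^ (-(c:ℝ)/6 + 2) := by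
    apply Real.rpow_le_rpow_of_exponent_le one_le_two
    have h1 : (c:ℝ) ≤ 6 * (T:ℝ) + 8 := by
      have : (c:ℤ) ≤ 6 * (T:ℤ) + 8 := by omega
      exact_mod_cast this
    linarith
  calc p j ≤ (1/2) / (2:ℝ) ^ (T:ℕ) := (le_div_iff₀ h2Tpos).mpr hE
    _ = (1/2) * ((2:ℝ) ^ (T:ℕ))⁻¹ := div_eq_mul_inv _ _
    _ = (2:ℝ) ^ (-(1:ℝ) - (T:ℝ)) := hval.symm
    _ ≤ _ := hpow
end

section
/- In any near list schedule with all pⱼ ≤ 1, at least half of the n jobs have processing requirement at most 2^{−c/6+2}, where c = ⌊C_max(σ)/C*_max⌋ − 1. -/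
namespace NLSaux

variable {n m : ℕ} (p : Fin n → ℝ) (σ : Fin n → Fin m)

noncomputable def pre (i : Fin m) (j : Fin n) : ℝ :=
  ∑ ℓ ∈ Finset.univ.filter (fun ℓ => σ ℓ = i ∧ ℓ < j), p ℓ

noncomputable def mach (i : Fin m) : ℝ :=
  ∑ j ∈ Finset.univ.filter (fun j => σ j = i), p j

lemma pre_nonneg (hp0 : ∀ j, 0 ≤ p j) (i : Fin m) (j : Fin n) : 0 ≤ pre p σ i j :=
  Finset.sum_nonneg fun ℓ _ => hp0 ℓ

lemma pre_mono (hp0 : ∀ j, 0 ≤ p j) (i : Fin m) {j j' : Fin n} (h : j ≤ j') :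
    pre p σ i j ≤ pre p σ i j' := by
  apply Finset.sum_le_sum_of_subset_of_nonneg
  · intro ℓ hℓ
    simp only [Finset.mem_filter, Finset.mem_univ, true_and] at hℓ ⊢
    exact ⟨hℓ.1, lt_of_lt_of_le hℓ.2 h⟩
  · intro ℓ _ _; exact hp0 ℓ

lemma le_filter_eq (i : Fin m) (j₀ : Fin n) (h : σ j₀ = i) :
    Finset.univ.filter (fun ℓ => σ ℓ = i ∧ ℓ ≤ j₀)
      = insert j₀ (Finset.univ.filter (fun ℓ => σ ℓ = i ∧ ℓ < j₀)) := by
  ext ℓ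
  simp only [Finset.mem_filter, Finset.mem_univ, true_and, Finset.mem_insert]
  constructor
  · rintro ⟨h1, h2⟩
    rcases eq_or_lt_of_le h2 with h3 | h3
    · exact Or.inl h3
    · exact Or.inr ⟨h1, h3⟩
  · rintro (rfl | ⟨h1, h2⟩)
    exacts [⟨h, le_rfl⟩, ⟨h1, h2.le⟩]

lemma mass (i : Fin m) (j₀ : Fin n) (h : σ j₀ = i) :
    ∑ j ∈ Finset.univ.filter (fun ℓ => σ ℓ = i ∧ ℓ ≤ j₀), p j = pre p σ i j₀ + p j₀ := by
  rw [le_filter_eq σ i j₀ h, Finset.sum_insert (by simp), pre, add_comm]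

lemma cross (hp0 : ∀ j, 0 ≤ p j) (i : Fin m) (x : ℝ) (hx0 : 0 ≤ x) (hxP : x < mach p σ i) :
    ∃ j, σ j = i ∧ pre p σ i j ≤ x ∧ x < pre p σ i j + p j := by
  classical
  set F := Finset.univ.filter (fun j : Fin n => σ j = i) with hF
  have hFne : F.Nonempty := by
    by_contra h
    rw [Finset.not_nonempty_iff_eq_empty] at h
    have : mach p σ i = 0 := by rw [mach, ← hF, h, Finset.sum_empty]
    linarith
  set A := F.filter (fun j => pre p σ i j ≤ x) with hA
  have hAne : A.Nonempty := by
    refine ⟨F.min' hFne, ?_⟩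
    rw [hA, Finset.mem_filter]
    refine ⟨F.min'_mem hFne, ?_⟩
    have hempty : Finset.univ.filter (fun ℓ => σ ℓ = i ∧ ℓ < F.min' hFne) = ∅ := by
      rw [Finset.filter_eq_empty_iff]
      rintro ℓ _ ⟨h1, h2⟩
      exact absurd (F.min'_le ℓ (by simp [hF, h1])) (not_le.mpr h2)
    rw [pre, hempty, Finset.sum_empty]
    exact hx0
  set j := A.max' hAne with hj
  have hjA : j ∈ A := A.max'_mem hAne
  rw [hA, Finset.mem_filter] at hjA
  have hjF : j ∈ F := hjA.1
  have hjσ : σ j = i := by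
    have := hjF; rw [hF, Finset.mem_filter] at this; exact this.2
  refine ⟨j, hjσ, hjA.2, ?_⟩
  by_contra hcon
  push_neg at hcon
  by_cases hnext : (F.filter (fun ℓ => j < ℓ)).Nonempty
  · set j' := (F.filter (fun ℓ => j < ℓ)).min' hnext with hj'
    have hj'mem := (F.filter (fun ℓ => j < ℓ)).min'_mem hnext
    rw [Finset.mem_filter] at hj'mem
    have hjj' : j < j' := hj'mem.2
    have hset : Finset.univ.filter (fun ℓ => σ ℓ = i ∧ ℓ < j')
        = Finset.univ.filter (fun ℓ => σ ℓ = i ∧ ℓ ≤ j) := by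
      ext ℓ
      simp only [Finset.mem_filter, Finset.mem_univ, true_and]
      constructor
      · rintro ⟨h1, h2⟩
        refine ⟨h1, ?_⟩
        by_contra hgt
        push_neg at hgt
        have : j' ≤ ℓ := (F.filter (fun ℓ => j < ℓ)).min'_le ℓ
          (by simp only [Finset.mem_filter]; exact ⟨by simp [hF, h1], hgt⟩)
        exact absurd h2 (not_lt.mpr this)
      · rintro ⟨h1, h2⟩
        exact ⟨h1, lt_of_le_of_lt h2 hjj'⟩
    have hpre' : pre p σ i j' = pre p σ i j + p j := by
      rw [pre, hset, mass p σ i j hjσ]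
    have hj'A : j' ∈ A := by
      rw [hA, Finset.mem_filter]
      exact ⟨hj'mem.1, by rw [hpre']; exact hcon⟩
    exact absurd (A.le_max' j' hj'A) (not_le.mpr hjj')
  · have hsub : F = Finset.univ.filter (fun ℓ => σ ℓ = i ∧ ℓ ≤ j) := by
      ext ℓ
      simp only [hF, Finset.mem_filter, Finset.mem_univ, true_and]
      constructor
      · intro h1
        refine ⟨h1, ?_⟩
        by_contra hgt
        push_neg at hgt
        exact hnext ⟨ℓ, by simp only [Finset.mem_filter]; exact ⟨by simp [hF, h1], hgt⟩⟩
      · exact fun h => h.1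
    have : mach p σ i = pre p σ i j + p j := by
      rw [mach, ← hF, hsub, mass p σ i j hjσ]
    linarith

end NLSaux

set_option maxHeartbeats 1000000 in
open NLSaux in
/-- In any near list schedule with all pⱼ ≤ 1, at least half of the
n jobs have processing requirement at most 2^{−c/6+2}. -/
theorem near_list_schedule_many_small_jobs
    (m n : ℕ) (hm : 0 < m) (hn : 0 < n)
    (s : Fin m → ℝ) (hspos : ∀ i, 0 < s i)
    (hsorted : ∀ i i' : Fin m, i ≤ i' → s i' ≤ s i)
    (p : Fin n → ℝ) (hp0 : ∀ j, 0 ≤ p j)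
    (σ : Fin n → Fin m)
    (L : Fin m → ℝ)
    (hL : ∀ i, L i = (∑ j ∈ Finset.univ.filter (fun j => σ j = i), p j) / s i)
    (hNL : ∀ (j : Fin n) (i' : Fin m), i' ≠ σ j →
      L (σ j) - (∑ ℓ ∈ Finset.univ.filter (fun ℓ => σ ℓ = σ j ∧ ℓ < j), p ℓ) / s (σ j)
        ≤ L i' + p j / s i')
    (Cmax Copt : ℝ)
    (hCmax : Cmax = ⨆ i, L i)
    (hCopt : Copt = ⨅ τ : Fin n → Fin m,
      ⨆ i, (∑ j ∈ Finset.univ.filter (fun j => τ j = i), p j) / s i)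
    (c : ℤ) (hc : c = ⌊Cmax / Copt⌋ - 1)
    (H : ℤ → Finset (Fin m))
    (hH : ∀ k : ℤ, H k = Finset.univ.filter (fun i => ∀ i' ≤ i, (k : ℝ) * Copt ≤ L i'))
    (hp1 : ∀ j, p j ≤ 1) :
    n ≤ 2 * (Finset.univ.filter (fun j => p j ≤ (2 : ℝ) ^ (-(c : ℝ) / 6 + 2))).card := by
  classical
  set T : ℝ := (2 : ℝ) ^ (-(c : ℝ) / 6 + 2) with hTdef
  by_cases hT1 : (1 : ℝ) ≤ T
  · have huniv : Finset.univ.filter (fun j => p j ≤ T) = Finset.univ := by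
      apply Finset.filter_true_of_mem
      intro j _
      exact le_trans (hp1 j) hT1
    rw [huniv, Finset.card_univ, Fintype.card_fin]
    omega
  push_neg at hT1
  have hc13 : 13 ≤ c := by
    by_contra h
    push_neg at h
    have hcr : (c : ℝ) ≤ 12 := by exact_mod_cast (by omega : c ≤ 12)
    have : (1 : ℝ) ≤ T := Real.one_le_rpow one_le_two (by linarith)
    linarith
  set i0 : Fin m := ⟨0, hm⟩ with hi0
  have hi0le : ∀ i : Fin m, i0 ≤ i := fun i => by simp [hi0, Fin.le_def]
  have hne : Nonempty (Fin m) := ⟨i0⟩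
  -- optimal schedule
  set mk : (Fin n → Fin m) → ℝ :=
    fun τ => ⨆ i, (∑ j ∈ Finset.univ.filter (fun j => τ j = i), p j) / s i with hmk
  obtain ⟨τ, hτ⟩ := Finite.exists_min mk
  have hCopt_eq : Copt = mk τ := by
    rw [hCopt]
    apply le_antisymm
    · exact ciInf_le ⟨mk τ, by rintro y ⟨τ', rfl⟩; exact hτ τ'⟩ τ
    · exact le_ciInf hτ
  have hPopt : ∀ i, (∑ j ∈ Finset.univ.filter (fun j => τ j = i), p j) ≤ s i * Copt := by
    intro i
    have h1 : (∑ j ∈ Finset.univ.filter (fun j => τ j = i), p j) / s i ≤ mk τ := by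
      have hmk2 : mk τ = ⨆ i', (∑ j ∈ Finset.univ.filter (fun j => τ j = i'), p j) / s i' := by
        rw [hmk]
      rw [hmk2]
      exact le_ciSup (f := fun i' => (∑ j ∈ Finset.univ.filter (fun j => τ j = i'), p j) / s i')
        (Set.finite_range _).bddAbove i
    rw [← hCopt_eq] at h1
    rw [div_le_iff₀ (hspos i)] at h1
    linarith [h1]
  have hpopt : ∀ j, p j ≤ s (τ j) * Copt := fun j =>
    le_trans (Finset.single_le_sum (fun ℓ _ => hp0 ℓ) (by simp)) (hPopt (τ j))
  have hCopt0 : 0 ≤ Copt := by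
    have h1 := hpopt ⟨0, hn⟩
    have h2 := hp0 ⟨0, hn⟩
    nlinarith [hspos (τ ⟨0, hn⟩)]
  have hCpos : 0 < Copt := by
    rcases eq_or_lt_of_le hCopt0 with h | h
    · exfalso
      rw [← h, div_zero] at hc
      simp at hc
      omega
    · exact h
  have hfloor : ((c : ℝ) + 1) * Copt ≤ Cmax := by
    have h1 : ((⌊Cmax / Copt⌋ : ℤ) : ℝ) ≤ Cmax / Copt := Int.floor_le _
    have h2 : (c : ℝ) + 1 = ((⌊Cmax / Copt⌋ : ℤ) : ℝ) := by rw [hc]; push_cast; ring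
    rw [h2]
    exact (le_div_iff₀ hCpos).mp h1
  have hCmaxpos : 0 < Cmax := by
    have : (14 : ℝ) ≤ (c : ℝ) + 1 := by exact_mod_cast (by omega : (14:ℤ) ≤ c + 1)
    nlinarith
  have hbddL : BddAbove (Set.range L) := (Set.finite_range L).bddAbove
  have hLle : ∀ i, L i ≤ Cmax := fun i => hCmax ▸ le_ciSup hbddL i
  obtain ⟨imax, himax⟩ := Finite.exists_max L
  have hCmax_eq : Cmax = L imax := by
    rw [hCmax]; exact le_antisymm (ciSup_le himax) (le_ciSup hbddL imax)
  have hmachL : ∀ i, mach p σ i = L i * s i := by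
    intro i
    rw [hL i, mach, div_mul_cancel₀ _ (hspos i).ne']
  have hmach0 : ∀ i, 0 ≤ mach p σ i := fun i => Finset.sum_nonneg fun j _ => hp0 j
  -- first-job anchor
  have hanchor : ∀ i' : Fin m,
      ∃ w : ℝ, w ≤ 1 ∧ w ≤ s i0 * Copt ∧ 0 ≤ w ∧ Cmax ≤ L i' + w / s i' := by
    intro i'
    by_cases hii : i' = imax
    · refine ⟨0, by norm_num, mul_nonneg (hspos i0).le hCopt0, le_rfl, ?_⟩
      rw [hii, zero_div, add_zero, hCmax_eq]
    · have hPpos : 0 < mach p σ imax := by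
        rw [hmachL]
        have h1 := hspos imax
        have h2 : 0 < L imax := by rw [← hCmax_eq]; exact hCmaxpos
        positivity
      obtain ⟨j, hjσ, hjpre, _⟩ := cross p σ hp0 imax 0 le_rfl hPpos
      have hpre0 : pre p σ imax j = 0 := le_antisymm hjpre (pre_nonneg p σ hp0 imax j)
      have hnl := hNL j i' (by rw [hjσ]; exact hii)
      rw [show (∑ ℓ ∈ Finset.univ.filter (fun ℓ => σ ℓ = σ j ∧ ℓ < j), p ℓ)
          = pre p σ imax j from by rw [pre, hjσ]] at hnl
      rw [hjσ, hpre0, zero_div, sub_zero] at hnl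
      refine ⟨p j, hp1 j, le_trans (hpopt j) ?_, hp0 j, ?_⟩
      · exact mul_le_mul_of_nonneg_right (hsorted i0 (τ j) (hi0le _)) hCopt0
      · rw [hCmax_eq]; exact hnl
  have hL0c : (c : ℝ) * Copt ≤ L i0 := by
    obtain ⟨w, _, hw2, _, hw4⟩ := hanchor i0
    have hws : w / s i0 ≤ Copt := by
      rw [div_le_iff₀ (hspos i0)]
      linarith
    linarith
  -- THE STEP LEMMA
  have hstep : ∀ (x : ℝ) (a b : Fin m), 0 ≤ x → L a < x →
      (∀ i : Fin m, i < b → x + 6 * Copt ≤ L i) → i0 < b → 2 * s a ≤ s b := by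
    intro x a b hx hLa hload hb0
    by_contra hcon
    push_neg at hcon
    set Mb := Finset.univ.filter (fun i : Fin m => i < b) with hMb
    have hi0Mb : i0 ∈ Mb := by simp [hMb, hb0]
    have hMbne : Mb.Nonempty := ⟨i0, hi0Mb⟩
    have key : ∀ i ∈ Mb, 3 * Copt * s i <
        ∑ j ∈ Finset.univ.filter (fun j => σ j = i ∧ τ j < b), p j := by
      intro i hiMb
      have hib : i < b := by simpa [hMb] using hiMb
      have hLi : x + 6 * Copt ≤ L i := hload i hib
      have hsi := hspos i
      set xi : ℝ := mach p σ i - (x + 3 * Copt) * s i with hxi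
      have hxieq : xi = (L i - (x + 3 * Copt)) * s i := by rw [hxi, hmachL i]; ring
      have hxi0 : 0 ≤ xi := by rw [hxieq]; nlinarith
      have hxiP : xi < mach p σ i := by rw [hxi]; nlinarith [hCpos]
      obtain ⟨j₀, hj₀σ, hj₀pre, hj₀x⟩ := cross p σ hp0 i xi hxi0 hxiP
      have hbig : ∀ j : Fin n, σ j = i → j ≤ j₀ → τ j < b := by
        intro j hjσ hjle
        have hprej : pre p σ i j ≤ xi := le_trans (pre_mono p σ hp0 i hjle) hj₀pre
        have hia : a ≠ i := by
          intro h
          rw [← h] at hLi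
          linarith [hCpos]
        have hnl := hNL j a (by rw [hjσ]; exact hia)
        rw [show (∑ ℓ ∈ Finset.univ.filter (fun ℓ => σ ℓ = σ j ∧ ℓ < j), p ℓ)
            = pre p σ i j from by rw [pre, hjσ]] at hnl
        rw [hjσ] at hnl
        have h1 : pre p σ i j / s i ≤ L i - (x + 3 * Copt) := by
          rw [div_le_iff₀ hsi]
          rw [hxieq] at hprej
          linarith
        have h3 : 3 * Copt < p j / s a := by linarith
        have hpj : 3 * Copt * s a < p j := (lt_div_iff₀ (hspos a)).mp h3
        by_contra hge
        push_neg at hge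
        have hsτ : s (τ j) ≤ s b := hsorted b (τ j) hge
        nlinarith [hpopt j, mul_le_mul_of_nonneg_right hsτ hCopt0, hCpos, hspos a]
      have hmassb : xi < ∑ j ∈ Finset.univ.filter (fun ℓ => σ ℓ = i ∧ ℓ ≤ j₀), p j := by
        rw [mass p σ i j₀ hj₀σ]
        exact hj₀x
      have hsubset : Finset.univ.filter (fun ℓ => σ ℓ = i ∧ ℓ ≤ j₀) ⊆
          Finset.univ.filter (fun j => σ j = i ∧ τ j < b) := by
        intro j hj
        simp only [Finset.mem_filter, Finset.mem_univ, true_and] at hj ⊢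
        exact ⟨hj.1, hbig j hj.1 hj.2⟩
      have hsum_le : (∑ j ∈ Finset.univ.filter (fun ℓ => σ ℓ = i ∧ ℓ ≤ j₀), p j) ≤
          ∑ j ∈ Finset.univ.filter (fun j => σ j = i ∧ τ j < b), p j :=
        Finset.sum_le_sum_of_subset_of_nonneg hsubset (fun j _ _ => hp0 j)
      have hxi_ge : 3 * Copt * s i ≤ xi := by
        rw [hxieq]
        nlinarith
      linarith
    have hsum1 : ∑ i ∈ Mb, 3 * Copt * s i <
        ∑ i ∈ Mb, ∑ j ∈ Finset.univ.filter (fun j => σ j = i ∧ τ j < b), p j :=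
      Finset.sum_lt_sum_of_nonempty hMbne key
    have hfeq : ∀ i : Fin m, Finset.univ.filter (fun j => σ j = i ∧ τ j < b)
        = (Finset.univ.filter (fun j : Fin n => τ j < b)).filter (fun j => σ j = i) := by
      intro i
      rw [Finset.filter_filter]
      apply Finset.filter_congr
      intro j _
      exact and_comm
    have hsum2 : (∑ i ∈ Mb, ∑ j ∈ Finset.univ.filter (fun j => σ j = i ∧ τ j < b), p j)
        ≤ ∑ j ∈ Finset.univ.filter (fun j : Fin n => τ j < b), p j := by
      calc (∑ i ∈ Mb, ∑ j ∈ Finset.univ.filter (fun j => σ j = i ∧ τ j < b), p j)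
          = ∑ i ∈ Mb, ∑ j ∈ (Finset.univ.filter (fun j : Fin n => τ j < b)).filter
              (fun j => σ j = i), p j := by
            apply Finset.sum_congr rfl
            intro i _
            rw [hfeq i]
        _ ≤ ∑ i ∈ Finset.univ, ∑ j ∈ (Finset.univ.filter (fun j : Fin n => τ j < b)).filter
              (fun j => σ j = i), p j := by
            apply Finset.sum_le_sum_of_subset_of_nonneg (Finset.subset_univ Mb)
            intro i _ _
            exact Finset.sum_nonneg fun j _ => hp0 j
        _ = ∑ j ∈ Finset.univ.filter (fun j : Fin n => τ j < b), p j :=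
            Finset.sum_fiberwise_of_maps_to (fun j _ => Finset.mem_univ (σ j)) p
    have hsum3 : (∑ j ∈ Finset.univ.filter (fun j : Fin n => τ j < b), p j)
        ≤ ∑ i ∈ Mb, s i * Copt := by
      have h1 : ∑ i ∈ Mb, ∑ j ∈ (Finset.univ.filter (fun j : Fin n => τ j < b)).filter
          (fun j => τ j = i), p j = ∑ j ∈ Finset.univ.filter (fun j : Fin n => τ j < b), p j := by
        apply Finset.sum_fiberwise_of_maps_to
        intro j hj
        simp only [Finset.mem_filter, Finset.mem_univ, true_and] at hj
        simp [hMb, hj]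
      rw [← h1]
      apply Finset.sum_le_sum
      intro i _
      refine le_trans ?_ (hPopt i)
      apply Finset.sum_le_sum_of_subset_of_nonneg
      · intro j hj
        simp only [Finset.mem_filter, Finset.mem_univ, true_and] at hj ⊢
        exact hj.2
      · intro j _ _
        exact hp0 j
    have hWpos : 0 < ∑ i ∈ Mb, s i := Finset.sum_pos (fun i _ => hspos i) hMbne
    have e1 : ∑ i ∈ Mb, 3 * Copt * s i = 3 * Copt * ∑ i ∈ Mb, s i := by
      rw [Finset.mul_sum]
    have e2 : ∑ i ∈ Mb, s i * Copt = (∑ i ∈ Mb, s i) * Copt := by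
      rw [Finset.sum_mul]
    have hfin : 3 * Copt * (∑ i ∈ Mb, s i) < (∑ i ∈ Mb, s i) * Copt := by linarith
    have hpos := mul_pos hCpos hWpos
    linarith [hfin, hpos]
  -- the level sets and chain
  have hbad0ne : (Finset.univ.filter (fun i : Fin m => L i < 2 * Copt)).Nonempty := by
    by_contra h
    rw [Finset.not_nonempty_iff_eq_empty, Finset.filter_eq_empty_iff] at h
    have h1 : ∀ i : Fin m, 2 * Copt * s i ≤ mach p σ i := by
      intro i
      have := not_lt.mp (h (Finset.mem_univ i))
      rw [hmachL]
      nlinarith [hspos i]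
    have h2 : (∑ i, 2 * Copt * s i) ≤ ∑ i, mach p σ i := Finset.sum_le_sum fun i _ => h1 i
    have h3 : ∑ i, mach p σ i = ∑ j, p j := by
      simp only [mach]
      exact Finset.sum_fiberwise_of_maps_to (fun j _ => Finset.mem_univ (σ j)) p
    have h4 : (∑ j, p j) ≤ ∑ i, s i * Copt := by
      rw [← Finset.sum_fiberwise_of_maps_to (fun j (_ : j ∈ Finset.univ) => Finset.mem_univ (τ j)) p]
      exact Finset.sum_le_sum fun i _ => hPopt i
    have hS : 0 < ∑ i : Fin m, s i := Finset.sum_pos (fun i _ => hspos i) ⟨i0, Finset.mem_univ i0⟩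
    have e1 : (∑ i, 2 * Copt * s i) = 2 * Copt * ∑ i, s i := by rw [Finset.mul_sum]
    have e2 : (∑ i, s i * Copt) = (∑ i, s i) * Copt := by rw [Finset.sum_mul]
    nlinarith
  set bad : ℕ → Finset (Fin m) :=
    fun k => Finset.univ.filter (fun i => L i < (2 + 6 * (k : ℝ)) * Copt) with hbad
  have hbadne : ∀ k, (bad k).Nonempty := by
    intro k
    obtain ⟨i, hi⟩ := hbad0ne
    simp only [Finset.mem_filter, Finset.mem_univ, true_and] at hi
    refine ⟨i, ?_⟩
    simp only [hbad, Finset.mem_filter, Finset.mem_univ, true_and]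
    have hk0 : (0 : ℝ) ≤ (k : ℝ) := Nat.cast_nonneg k
    nlinarith
  set q : ℕ → Fin m := fun k => (bad k).min' (hbadne k) with hq
  have hqmem : ∀ k, L (q k) < (2 + 6 * (k : ℝ)) * Copt := by
    intro k
    have := (bad k).min'_mem (hbadne k)
    simp only [hbad, Finset.mem_filter, Finset.mem_univ, true_and] at this
    exact this
  have hqmin : ∀ (k : ℕ) (i : Fin m), i < q k → (2 + 6 * (k : ℝ)) * Copt ≤ L i := by
    intro k i hi
    by_contra hlt
    push_neg at hlt
    have : q k ≤ i := (bad k).min'_le i (by simp [hbad, hlt])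
    exact absurd hi (not_lt.mpr this)
  -- integer parameter t
  set t : ℕ := ((c - 2) / 6).toNat with htdef
  have h6a : 6 * (t : ℤ) ≤ c - 2 := by omega
  have h6b : c - 7 ≤ 6 * (t : ℤ) := by omega
  have hstepk : ∀ k : ℕ, 6 * (k : ℤ) + 8 ≤ c → 2 * s (q k) ≤ s (q (k + 1)) := by
    intro k hk
    apply hstep ((2 + 6 * (k : ℝ)) * Copt) (q k) (q (k + 1))
      (mul_nonneg (by positivity) hCopt0) (hqmem k)
    · intro i hi
      have := hqmin (k + 1) i hi
      push_cast at this ⊢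
      linarith
    · have hcc : (2 : ℝ) + 6 * ((k : ℝ) + 1) ≤ (c : ℝ) := by
        have : (6 * k + 8 : ℤ) ≤ c := hk
        have := (by exact_mod_cast this : (6 * (k : ℝ) + 8) ≤ (c : ℝ))
        linarith
      have hnotbad : ¬ (L i0 < (2 + 6 * ((k + 1 : ℕ) : ℝ)) * Copt) := by
        push_neg
        have h1 : (2 + 6 * ((k + 1 : ℕ) : ℝ)) * Copt ≤ (c : ℝ) * Copt := by
          have : (2 : ℝ) + 6 * ((k + 1 : ℕ) : ℝ) ≤ (c : ℝ) := by push_cast; push_cast at hcc; linarith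
          nlinarith
        linarith [hL0c]
      have hne' : q (k + 1) ≠ i0 := by
        intro h
        exact hnotbad (h ▸ hqmem (k + 1))
      exact lt_of_le_of_ne (hi0le _) (fun h => hne' h.symm)
  have hchain : ∀ k, k ≤ t → (2 : ℝ) ^ k * s (q 0) ≤ s (q k) := by
    intro k
    induction k with
    | zero => intro _; simp
    | succ k ih =>
      intro hk1
      have h1 := ih (by omega)
      have h2 := hstepk k (by omega)
      have h3 := hspos (q k)
      calc (2 : ℝ) ^ (k + 1) * s (q 0) = 2 * ((2 : ℝ) ^ k * s (q 0)) := by ring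
        _ ≤ 2 * s (q k) := by linarith
        _ ≤ s (q (k + 1)) := h2
  have htop : s (q t) * Copt < 1 := by
    obtain ⟨w, hw1, _, hw3, hw4⟩ := hanchor (q t)
    have h1 : Cmax ≤ L (q t) + 1 / s (q t) := by
      refine le_trans hw4 ?_
      have h := hspos (q t)
      have : w / s (q t) ≤ 1 / s (q t) := (div_le_div_iff_of_pos_right h).mpr hw1
      linarith
    have h2 := hqmem t
    have h4 : (1 : ℝ) ≤ (c : ℝ) - 1 - 6 * (t : ℝ) := by
      have : (6 * (t : ℤ) : ℝ) ≤ (c : ℝ) - 2 := by exact_mod_cast h6a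
      push_cast at this
      linarith
    have h5 : Copt < 1 / s (q t) := by nlinarith [hfloor]
    rw [lt_div_iff₀ (hspos (q t))] at h5
    linarith [h5]
  have hsmallT : s (q 0) * Copt < T := by
    have h1 := hchain t le_rfl
    have h2 : s (q 0) * Copt < 1 / 2 ^ t := by
      rw [lt_div_iff₀ (by positivity : (0 : ℝ) < 2 ^ t)]
      nlinarith [mul_le_mul_of_nonneg_right h1 hCopt0, htop]
    refine lt_of_lt_of_le h2 ?_
    have h3 : (1 : ℝ) / 2 ^ t = (2 : ℝ) ^ (-(t : ℝ)) := by
      rw [Real.rpow_neg (by norm_num), Real.rpow_natCast, one_div]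
    rw [h3, hTdef]
    apply (Real.rpow_le_rpow_left_iff one_lt_two).mpr
    have : (c : ℝ) - 7 ≤ 6 * (t : ℝ) := by exact_mod_cast h6b
    linarith
  -- final counting
  set a0 : Fin m := q 0 with ha0
  set Mb0 := Finset.univ.filter (fun i : Fin m => i < a0) with hMb0
  set W := ∑ i ∈ Mb0, s i with hWdef
  set SIn := Finset.univ.filter (fun j : Fin n => τ j < a0) with hSIn
  set SOut := Finset.univ.filter (fun j : Fin n => ¬ τ j < a0) with hSOut
  have hInP : (∑ j ∈ SIn, p j) ≤ Copt * W := by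
    have h1 : ∑ i ∈ Mb0, ∑ j ∈ SIn.filter (fun j => τ j = i), p j = ∑ j ∈ SIn, p j := by
      apply Finset.sum_fiberwise_of_maps_to
      intro j hj
      simp only [hSIn, Finset.mem_filter, Finset.mem_univ, true_and] at hj
      simp only [hMb0, Finset.mem_filter, Finset.mem_univ, true_and]
      exact hj
    rw [← h1]
    calc (∑ i ∈ Mb0, ∑ j ∈ SIn.filter (fun j => τ j = i), p j)
        ≤ ∑ i ∈ Mb0, s i * Copt := by
          apply Finset.sum_le_sum
          intro i _
          refine le_trans ?_ (hPopt i)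
          apply Finset.sum_le_sum_of_subset_of_nonneg
          · intro j hj
            simp only [Finset.mem_filter] at hj ⊢
            exact ⟨Finset.mem_univ j, hj.2⟩
          · intro j _ _
            exact hp0 j
      _ = Copt * W := by rw [hWdef, Finset.mul_sum]; apply Finset.sum_congr rfl; intros; ring
  have htot : 2 * Copt * W ≤ ∑ j, p j := by
    have h1 : ∑ i, mach p σ i = ∑ j, p j := by
      simp only [mach]
      exact Finset.sum_fiberwise_of_maps_to (fun j _ => Finset.mem_univ (σ j)) p
    have h2 : ∑ i ∈ Mb0, mach p σ i ≤ ∑ i, mach p σ i :=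
      Finset.sum_le_sum_of_subset_of_nonneg (Finset.subset_univ Mb0) (fun i _ _ => hmach0 i)
    have h3 : ∀ i ∈ Mb0, 2 * Copt * s i ≤ mach p σ i := by
      intro i hi
      have hi' : i < a0 := by simpa [hMb0] using hi
      have hq0 := hqmin 0 i hi'
      rw [hmachL]
      push_cast at hq0
      nlinarith [hspos i]
    calc 2 * Copt * W = ∑ i ∈ Mb0, 2 * Copt * s i := by rw [hWdef, Finset.mul_sum]
      _ ≤ ∑ i ∈ Mb0, mach p σ i := Finset.sum_le_sum h3
      _ ≤ ∑ j, p j := le_trans h2 (le_of_eq h1)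
  have hOutSmall : ∀ j ∈ SOut, p j ≤ s a0 * Copt := by
    intro j hj
    have hj' : ¬ τ j < a0 := by simpa [hSOut] using hj
    have hsj : s (τ j) ≤ s a0 := hsorted a0 (τ j) (not_lt.mp hj')
    exact le_trans (hpopt j) (mul_le_mul_of_nonneg_right hsj hCopt0)
  have hsplit : (∑ j ∈ SIn, p j) + (∑ j ∈ SOut, p j) = ∑ j, p j := by
    rw [hSIn, hSOut]
    exact Finset.sum_filter_add_sum_filter_not _ _ _
  have hOutBig : Copt * W ≤ ∑ j ∈ SOut, p j := by linarith
  set Small := Finset.univ.filter (fun j : Fin n => p j ≤ T) with hSmall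
  set Big := Finset.univ.filter (fun j : Fin n => ¬ p j ≤ T) with hBig
  have hcards : Small.card + Big.card = n := by
    rw [hSmall, hBig, Finset.card_filter_add_card_filter_not, Finset.card_univ,
      Fintype.card_fin]
  have hTpos : 0 < T := Real.rpow_pos_of_pos two_pos _
  have hBigIn : Big ⊆ SIn := by
    intro j hj
    simp only [hBig, Finset.mem_filter, Finset.mem_univ, true_and, not_le] at hj
    simp only [hSIn, Finset.mem_filter, Finset.mem_univ, true_and]
    by_contra h
    have := hOutSmall j (by simp only [hSOut, Finset.mem_filter, Finset.mem_univ, true_and]; exact h)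
    linarith [hsmallT]
  have hOutSmallSet : SOut ⊆ Small := by
    intro j hj
    simp only [hSmall, Finset.mem_filter, Finset.mem_univ, true_and]
    exact le_trans (hOutSmall j hj) (le_of_lt hsmallT)
  have hBigCard : (Big.card : ℝ) * T ≤ ∑ j ∈ Big, p j := by
    have h := Finset.card_nsmul_le_sum Big p T ?_
    · simpa [nsmul_eq_mul] using h
    · intro j hj
      simp only [hBig, Finset.mem_filter, Finset.mem_univ, true_and, not_le] at hj
      exact le_of_lt hj
  have hOutCard : (∑ j ∈ SOut, p j) ≤ (SOut.card : ℝ) * T := by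
    have h := Finset.sum_le_card_nsmul SOut p T
      (fun j hj => le_trans (hOutSmall j hj) hsmallT.le)
    simpa [nsmul_eq_mul] using h
  have hBigInSum : (∑ j ∈ Big, p j) ≤ ∑ j ∈ SIn, p j :=
    Finset.sum_le_sum_of_subset_of_nonneg hBigIn (fun j _ _ => hp0 j)
  have hBO : (Big.card : ℝ) * T ≤ (SOut.card : ℝ) * T := by linarith
  have hBOn : Big.card ≤ SOut.card := by
    have := le_of_mul_le_mul_right hBO hTpos
    exact_mod_cast this
  have hOS : SOut.card ≤ Small.card := Finset.card_le_card hOutSmallSet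
  omega
end

section
/- Consider the schedule σ where machines are partitioned into classes M₀,...,M_r, class M_ℓ contains r!/ℓ! machines of speed 2^ℓ, and each machine in M_ℓ (ℓ ≥ 1) is assigned exactly ℓ jobs each with processing requirement in [2^ℓ, 2^ℓ + 2^{r+1}/φ) where φ ≥ 2^{2r} and r ≥ 1. Then σ is lex-jump optimal: for any job j on a machine i ∈ M_ℓ and any other machine i' ∈ M_{ℓ'}, L_{i'} + pⱼ/s_{i'} ≥ Lᵢ. -/
lemma key_zpow (k : ℤ) : (k : ℝ) + 1 ≤ (2:ℝ) ^ k := by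
  rcases le_or_gt 0 k with h | h
  · lift k to ℕ using h
    rw [zpow_natCast]
    have h1 : k + 1 ≤ 2 ^ k := Nat.succ_le_of_lt (Nat.lt_two_pow_self (n := k))
    exact_mod_cast h1
  · have h1 : (k:ℝ) + 1 ≤ 0 := by
      have : k + 1 ≤ 0 := by omega
      exact_mod_cast this
    have h2 : (0:ℝ) < (2:ℝ) ^ k := zpow_pos (by norm_num) k
    linarith

/-- The schedule in which every machine of class ℓ (speed 2^ℓ) carries
exactly ℓ jobs of processing requirement in [2^ℓ, 2^ℓ + 2^{r+1}/φ), with φ ≥ 2^{2r},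
is lex-jump optimal. -/
theorem constructed_schedule_lex_jump_optimal
    (r : ℕ) (hr : 1 ≤ r) (φ : ℝ) (hφ : (2 : ℝ) ^ (2 * r) ≤ φ)
    (m n : ℕ)
    (cls : Fin m → ℕ) (hcls : ∀ i, cls i ≤ r)
    (hclscard : ∀ ℓ ≤ r, (Finset.univ.filter (fun i => cls i = ℓ)).card
      = r.factorial / ℓ.factorial)
    (s : Fin m → ℝ) (hs : ∀ i, s i = 2 ^ (cls i))
    (p : Fin n → ℝ)
    (σ : Fin n → Fin m)
    (hplo : ∀ j, (2 : ℝ) ^ (cls (σ j)) ≤ p j)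
    (hphi : ∀ j, p j < (2 : ℝ) ^ (cls (σ j)) + 2 ^ (r + 1) / φ)
    (hcount : ∀ i, (Finset.univ.filter (fun j => σ j = i)).card = cls i)
    (L : Fin m → ℝ)
    (hL : ∀ i, L i = (∑ j ∈ Finset.univ.filter (fun j => σ j = i), p j) / s i) :
    ∀ (j : Fin n) (i' : Fin m), i' ≠ σ j → L (σ j) ≤ L i' + p j / s i' := by
  intro j i' _
  set i := σ j with hi
  set ℓ := cls i with hℓdef
  set ℓ' := cls i' with hℓ'def
  have hφpos : (0:ℝ) < φ := lt_of_lt_of_le (by positivity) hφ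
  have hjmem : j ∈ Finset.univ.filter (fun j' => σ j' = i) := by simp [hi]
  have hℓpos : 1 ≤ ℓ := by
    rw [hℓdef, ← hcount i]
    exact Finset.card_pos.mpr ⟨j, hjmem⟩
  -- upper bound on sum of jobs on i
  have hsum : (∑ j' ∈ Finset.univ.filter (fun j' => σ j' = i), p j')
      < (ℓ:ℝ) * ((2:ℝ)^ℓ + 2^(r+1)/φ) := by
    have h := Finset.sum_lt_sum_of_nonempty ⟨j, hjmem⟩
      (f := p) (g := fun _ => (2:ℝ)^ℓ + 2^(r+1)/φ) (fun x hx => by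
        have hx' : σ x = i := by simpa using hx
        have := hphi x
        rw [hx'] at this
        exact this)
    rw [Finset.sum_const, hcount i, nsmul_eq_mul] at h
    exact h
  -- key arithmetic inequality
  have hkey : (ℓ:ℝ) * 2^(r+1) ≤ 2^ℓ * φ := by
    have h1 : (ℓ:ℝ) ≤ r := by exact_mod_cast hcls i
    have h2 : (r:ℝ) ≤ 2^r := by exact_mod_cast (Nat.lt_two_pow_self (n := r)).le
    have h3 : (2:ℝ) ≤ 2^ℓ := by
      calc (2:ℝ) = 2^1 := (pow_one 2).symm
        _ ≤ 2^ℓ := pow_le_pow_right₀ one_le_two hℓpos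
    calc (ℓ:ℝ) * 2^(r+1) ≤ 2^r * 2^(r+1) := by
          apply mul_le_mul_of_nonneg_right (h1.trans h2) (by positivity)
      _ = 2 * 2^(2*r) := by ring
      _ ≤ 2^ℓ * φ := mul_le_mul h3 hφ (by positivity) (by positivity)
  have hLi : L i < (ℓ:ℝ) + 1 := by
    rw [hL, hs, div_lt_iff₀ (by positivity)]
    have hε : (ℓ:ℝ) * (2^(r+1)/φ) ≤ 2^ℓ := by
      rw [mul_div_assoc', div_le_iff₀ hφpos]
      exact hkey
    have hpow : (0:ℝ) < (2:ℝ)^ℓ := by positivity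
    calc (∑ j' ∈ Finset.univ.filter (fun j' => σ j' = i), p j')
        < (ℓ:ℝ) * ((2:ℝ)^ℓ + 2^(r+1)/φ) := hsum
      _ = (ℓ:ℝ) * 2^ℓ + (ℓ:ℝ) * (2^(r+1)/φ) := by ring
      _ ≤ (ℓ:ℝ) * 2^ℓ + 2^ℓ := by linarith
      _ = ((ℓ:ℝ) + 1) * 2^(cls i) := by ring
  -- lower bound on L i'
  have hLi' : (ℓ':ℝ) ≤ L i' := by
    rw [hL, hs, le_div_iff₀ (by positivity)]
    have h := Finset.card_nsmul_le_sum (Finset.univ.filter (fun j' => σ j' = i')) p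
      ((2:ℝ)^ℓ') (fun x hx => by
        have hx' : σ x = i' := by simpa using hx
        have := hplo x
        rw [hx'] at this
        exact this)
    rw [hcount i'] at h
    simpa [nsmul_eq_mul] using h
  -- lower bound on p j / s i'
  have hpj : (2:ℝ)^ℓ / 2^ℓ' ≤ p j / s i' := by
    rw [hs]
    have : (2:ℝ)^ℓ ≤ p j := hplo j
    gcongr
  have hzpow : (ℓ:ℝ) + 1 ≤ (ℓ':ℝ) + (2:ℝ)^ℓ/2^ℓ' := by
    have h := key_zpow ((ℓ:ℤ) - ℓ')
    have h2 : (2:ℝ)^((ℓ:ℤ)-(ℓ':ℤ)) = (2:ℝ)^ℓ/2^ℓ' := by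
      rw [zpow_sub₀ (two_ne_zero), zpow_natCast, zpow_natCast]
    rw [h2] at h
    push_cast at h
    linarith
  linarith
end

section
/- With a₀ = k², a₁ = k³, and a_h = ⌈(a_{h−1}/a_{h−2} − 7/15)·a_{h−1}⌉, let z_k be the smallest index h with a_h ≤ a_{h−1}. Then z_k < 5k/2. -/
/-- With the recurrence a₀ = k², a₁ = k³,
a_h = ⌈(a_{h−1}/a_{h−2} − 7/15)·a_{h−1}⌉, k ≥ 68, the smallest index z with
a_z ≤ a_{z−1} satisfies z < 5k/2. -/
theorem recurrence_num_classes_bound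
    (k : ℤ) (hk : 68 ≤ k)
    (a : ℕ → ℤ) (ha0 : a 0 = k ^ 2) (ha1 : a 1 = k ^ 3)
    (harec : ∀ h : ℕ, 2 ≤ h →
      a h = ⌈(((a (h - 1) : ℝ)) / ((a (h - 2) : ℝ)) - 7 / 15) * ((a (h - 1) : ℝ))⌉)
    (z : ℕ) (hz1 : 1 ≤ z) (hz : a z ≤ a (z - 1))
    (hzmin : ∀ h : ℕ, 1 ≤ h → h < z → a (h - 1) < a h) :
    (z : ℝ) < 5 * (k : ℝ) / 2 := by
  have hkR : (68 : ℝ) ≤ (k : ℝ) := by exact_mod_cast hk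
  -- all terms before index z are at least k^2
  have hpos : ∀ h : ℕ, h < z → (k : ℤ) ^ 2 ≤ a h := by
    intro h hh
    induction h with
    | zero => rw [ha0]
    | succ n ih =>
      have h1 : a n < a (n + 1) := by
        have := hzmin (n + 1) (by omega) hh
        simpa using this
      have := ih (by omega)
      omega
  -- key ratio bound
  have key : ∀ h : ℕ, 1 ≤ h → h < z →
      (a h : ℝ) ≤ ((k : ℝ) - ((h : ℝ) - 1) * (2 / 5)) * (a (h - 1) : ℝ) := by
    intro h
    induction h with
    | zero => intro h1; omega
    | succ n ih =>
      intro _ hlt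
      rcases Nat.eq_zero_or_pos n with hn0 | hn1
      · subst hn0
        simp only [Nat.cast_one, Nat.add_sub_cancel]
        rw [ha1, ha0]
        push_cast
        ring_nf
        exact le_refl _
      · have hIH := ih hn1 (by omega)
        have hrec := harec (n + 1) (by omega)
        have e1 : n + 1 - 1 = n := rfl
        have e2 : n + 1 - 2 = n - 1 := rfl
        rw [e1, e2] at hrec
        have hpn1 : (k : ℤ) ^ 2 ≤ a (n - 1) := hpos (n - 1) (by omega)
        have hpn : (k : ℤ) ^ 2 ≤ a n := hpos n (by omega)
        have hpn1R : ((k : ℝ)) ^ 2 ≤ (a (n - 1) : ℝ) := by exact_mod_cast hpn1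
        have hpnR : ((k : ℝ)) ^ 2 ≤ (a n : ℝ) := by exact_mod_cast hpn
        have hA : (0 : ℝ) < (a (n - 1) : ℝ) := by nlinarith
        have hB : (0 : ℝ) ≤ (a n : ℝ) := by nlinarith
        have hr : (a n : ℝ) / (a (n - 1) : ℝ) ≤ (k : ℝ) - ((n : ℝ) - 1) * (2 / 5) := by
          rw [div_le_iff₀ hA]; exact hIH
        have hceil : (a (n + 1) : ℝ) <
            ((a n : ℝ) / (a (n - 1) : ℝ) - 7 / 15) * (a n : ℝ) + 1 := by
          rw [hrec]; push_cast
          exact Int.ceil_lt_add_one _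
        have hmul : ((a n : ℝ) / (a (n - 1) : ℝ) - 7 / 15) * (a n : ℝ) ≤
            ((k : ℝ) - ((n : ℝ) - 1) * (2 / 5) - 7 / 15) * (a n : ℝ) := by
          apply mul_le_mul_of_nonneg_right _ hB
          linarith
        have e3 : (n + 1 : ℕ) - 1 = n := rfl
        rw [e3]
        push_cast
        nlinarith
  by_cases hz2 : z = 1
  · subst hz2; norm_num; linarith
  · have hz2' : 2 ≤ z := by omega
    have h1 := key (z - 1) (by omega) (by omega)
    have e : z - 1 - 1 = z - 2 := rfl
    rw [e] at h1
    have hmono := hzmin (z - 1) (by omega) (by omega)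
    rw [e] at hmono
    have hp := hpos (z - 2) (by omega)
    have hpR : ((k : ℝ)) ^ 2 ≤ (a (z - 2) : ℝ) := by exact_mod_cast hp
    have hmR : (a (z - 2) : ℝ) < (a (z - 1) : ℝ) := by exact_mod_cast hmono
    have hc : ((z - 1 : ℕ) : ℝ) = (z : ℝ) - 1 := by
      have : (1 : ℕ) ≤ z := hz1
      push_cast [Nat.cast_sub this]; ring
    rw [hc] at h1
    nlinarith [hpR, hmR, h1]
end

section
/- With the recurrence a₀ = k², a₁ = k³, a_h = ⌈(a_{h−1}/a_{h−2} − 7/15)·a_{h−1}⌉, and k' = ⌈5k/2⌉, for every h with 0 ≤ h ≤ z_k − 1 it holds that a_h ≤ k²·(2/5)^h·k'!/(k'−h)!. -/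
/-- With the recurrence a₀ = k², a₁ = k³,
a_h = ⌈(a_{h−1}/a_{h−2} − 7/15)·a_{h−1}⌉ and k' = ⌈5k/2⌉, for 0 ≤ h ≤ z_k − 1:
a_h ≤ k²·(2/5)^h·k'!/(k'−h)!. -/
theorem recurrence_growth_bound
    (k : ℤ) (hk : 68 ≤ k)
    (a : ℕ → ℤ) (ha0 : a 0 = k ^ 2) (ha1 : a 1 = k ^ 3)
    (harec : ∀ h : ℕ, 2 ≤ h →
      a h = ⌈(((a (h - 1) : ℝ)) / ((a (h - 2) : ℝ)) - 7 / 15) * ((a (h - 1) : ℝ))⌉)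
    (z : ℕ) (hz1 : 1 ≤ z) (hz : a z ≤ a (z - 1))
    (hzmin : ∀ h : ℕ, 1 ≤ h → h < z → a (h - 1) < a h)
    (k' : ℤ) (hk' : k' = ⌈(5 * (k : ℝ)) / 2⌉) (hzk' : (z : ℤ) ≤ k')
    (h : ℕ) (hh : h ≤ z - 1) :
    (a h : ℝ) ≤ (k : ℝ) ^ 2 * (2 / 5) ^ h
      * ((k'.toNat.factorial : ℝ) / ((k'.toNat - h).factorial : ℝ)) := by
  have hkR : (68 : ℝ) ≤ (k : ℝ) := by exact_mod_cast hk
  -- positivity / lower bound along the increasing part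
  have hpos : ∀ m : ℕ, m < z → k ^ 2 ≤ a m := by
    intro m
    induction m with
    | zero => intro _; rw [ha0]
    | succ n ih =>
      intro hm
      have h1 : n < z := Nat.lt_of_succ_lt hm
      have h2 := hzmin (n + 1) (by omega) hm
      simp only [Nat.add_sub_cancel] at h2
      exact le_trans (ih h1) (le_of_lt h2)
  -- ratio bound
  have hratio : ∀ m : ℕ, 1 ≤ m → m ≤ z - 1 →
      (a m : ℝ) ≤ ((k : ℝ) - ((m : ℝ) - 1) * (2 / 5)) * (a (m - 1) : ℝ) := by
    intro m
    induction m with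
    | zero => omega
    | succ n ih =>
      intro _ hm
      by_cases hn : n = 0
      · subst hn
        simp only [Nat.cast_one, Nat.add_sub_cancel, ha1, ha0]
        push_cast
        ring_nf
        nlinarith [sq_nonneg ((k : ℝ))]
      · have hn1 : 1 ≤ n := Nat.one_le_iff_ne_zero.mpr hn
        have hnz : n ≤ z - 1 := by omega
        have IH := ih hn1 hnz
        have hrec := harec (n + 1) (by omega)
        have e1 : (n + 1) - 1 = n := rfl
        have e2 : (n + 1) - 2 = n - 1 := by omega
        rw [e1, e2] at hrec
        have pa1 : (k : ℤ) ^ 2 ≤ a (n - 1) := hpos _ (by omega)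
        have pa2 : (k : ℤ) ^ 2 ≤ a n := hpos _ (by omega)
        have pa1R : (k : ℝ) ^ 2 ≤ (a (n - 1) : ℝ) := by exact_mod_cast pa1
        have pa2R : (k : ℝ) ^ 2 ≤ (a n : ℝ) := by exact_mod_cast pa2
        have hA1pos : (0 : ℝ) < (a (n - 1) : ℝ) := by nlinarith
        have hA2pos : (0 : ℝ) < (a n : ℝ) := by nlinarith
        have hA2big : (4624 : ℝ) ≤ (a n : ℝ) := by nlinarith
        have hceil : (a (n + 1) : ℝ) ≤
            ((a n : ℝ) / (a (n - 1) : ℝ) - 7 / 15) * (a n : ℝ) + 1 := by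
          rw [hrec]
          have := Int.ceil_lt_add_one
            (((a n : ℝ) / (a (n - 1) : ℝ) - 7 / 15) * (a n : ℝ))
          exact_mod_cast le_of_lt this
        have hdiv : (a n : ℝ) / (a (n - 1) : ℝ) ≤ (k : ℝ) - ((n : ℝ) - 1) * (2 / 5) := by
          rw [div_le_iff₀ hA1pos]
          exact IH
        have hmul := mul_le_mul_of_nonneg_right hdiv (le_of_lt hA2pos)
        have goalcast : (((n + 1 : ℕ) : ℝ) - 1) = (n : ℝ) := by push_cast; ring
        rw [e1, goalcast]
        nlinarith [hmul, hceil, hA2big]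
  -- connect to k'
  have hNk' : ((k'.toNat : ℤ)) = k' := Int.toNat_of_nonneg (by omega)
  have hk'R : 5 * (k : ℝ) / 2 ≤ (k' : ℝ) := by
    rw [hk']; exact Int.le_ceil _
  set N := k'.toNat with hN
  have hNR : ((N : ℝ)) = (k' : ℝ) := by exact_mod_cast hNk'
  -- main induction
  induction h with
  | zero =>
    simp only [pow_zero, Nat.sub_zero, mul_one, ha0]
    have : ((N.factorial : ℝ) / (N.factorial : ℝ)) = 1 := by
      apply div_self
      exact_mod_cast Nat.factorial_ne_zero N
    rw [this]
    push_cast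
    ring_nf
    simp
  | succ n ih =>
    have hn' : n ≤ z - 1 := by omega
    have IH := ih hn'
    have hr := hratio (n + 1) (by omega) hh
    simp only [Nat.add_sub_cancel] at hr
    have goalcast : (((n + 1 : ℕ) : ℝ) - 1) = (n : ℝ) := by push_cast; ring
    rw [goalcast] at hr
    -- coefficient bound
    have hcoef : (k : ℝ) - (n : ℝ) * (2 / 5) ≤ 2 / 5 * ((k' : ℝ) - (n : ℝ)) := by
      linarith
    have hzint : (z : ℤ) ≤ (N : ℤ) := by rw [hNk']; exact hzk'
    have hzN : z ≤ N := by exact_mod_cast hzint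
    have hn1N : n + 1 ≤ N := by omega
    have panR : (0 : ℝ) ≤ (a n : ℝ) := by
      have := hpos n (by omega)
      have : (k : ℝ) ^ 2 ≤ (a n : ℝ) := by exact_mod_cast this
      nlinarith
    have key : (a (n + 1) : ℝ) ≤ 2 / 5 * ((k' : ℝ) - (n : ℝ)) * (a n : ℝ) :=
      le_trans hr (mul_le_mul_of_nonneg_right hcoef panR)
    have hcnn : (0 : ℝ) ≤ 2 / 5 * ((k' : ℝ) - (n : ℝ)) := by
      have : (n : ℝ) + 1 ≤ (N : ℝ) := by exact_mod_cast hn1N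
      rw [← hNR]; linarith
    have step2 : (a (n + 1) : ℝ) ≤ 2 / 5 * ((k' : ℝ) - (n : ℝ)) *
        ((k : ℝ) ^ 2 * (2 / 5) ^ n * ((N.factorial : ℝ) / ((N - n).factorial : ℝ))) :=
      le_trans key (mul_le_mul_of_nonneg_left IH hcnn)
    -- factorial identity
    have efac : (N - n).factorial = (N - n) * (N - (n + 1)).factorial := by
      rw [show N - n = (N - (n + 1)) + 1 by omega, Nat.factorial_succ]
    have hfne : ((N - (n + 1)).factorial : ℝ) ≠ 0 := by
      exact_mod_cast Nat.factorial_ne_zero _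
    have hfne2 : ((N - n).factorial : ℝ) ≠ 0 := by
      exact_mod_cast Nat.factorial_ne_zero _
    have hsub : ((N - n : ℕ) : ℝ) = (k' : ℝ) - (n : ℝ) := by
      rw [Nat.cast_sub (by omega), hNR]
    have hcR : ((N - n).factorial : ℝ) = ((k' : ℝ) - (n : ℝ)) * ((N - (n + 1)).factorial : ℝ) := by
      rw [efac, Nat.cast_mul, hsub]
    have hc0 : ((k' : ℝ) - (n : ℝ)) ≠ 0 := by
      have : (n : ℝ) + 1 ≤ (N : ℝ) := by exact_mod_cast hn1N
      rw [← hNR]; intro hcon; linarith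
    have efacR : ((N.factorial : ℝ) / ((N - (n + 1)).factorial : ℝ))
        = ((k' : ℝ) - (n : ℝ)) * ((N.factorial : ℝ) / ((N - n).factorial : ℝ)) := by
      rw [hcR, mul_div_assoc', mul_div_mul_left _ _ hc0]
    calc (a (n + 1) : ℝ) ≤ _ := step2
      _ = (k : ℝ) ^ 2 * (2 / 5) ^ (n + 1)
          * ((N.factorial : ℝ) / ((N - (n + 1)).factorial : ℝ)) := by
        rw [efacR]; ring
end
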